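/- arXiv:0712.0405 — 7 statements merged into one kernel-verified Lean document; each statement's English description precedes it below -/
import Mathlib

section
/- In the Sweedler algebra T_{-1}, the set of elements t satisfying t² = 1 is exactly {1, -1} ∪ {±g + h : h ∈ Rad T_{-1}}. -/
/-! Write `t = p + q g + r x + s gx` in the basis `1, g, x, gx`. The relations `g² = 1`, `x² = 0`,
`xg = -gx` give `t² = (p² + q²) + 2pq g + 2pr x + 2ps gx`, so, as `2 ≠ 0`, `t² = 1` means
`p² + q² = 1` and `p q = p r = p s = 0`: either `p = ±1` and `t = ±1`, or `p = 0`, `q = ±1` and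
`t = ±g + (r x + s gx)`. -/

namespace Sweedler

variable {k A : Type*}

section Coordinates

variable [CommRing k] [Ring A] [Algebra k A]

def ofCoords (g x : A) (p q r s : k) : A := p • 1 + q • g + r • x + s • (g * x)

theorem ofCoords_sq {g x : A} (hg : g ^ 2 = 1) (hx : x ^ 2 = 0) (hxg : x * g = -(g * x))
    (p q r s : k) :
    ofCoords g x p q r s ^ 2 =
      ofCoords g x (p ^ 2 + q ^ 2) (2 * p * q) (2 * p * r) (2 * p * s) := by
  have hgg : g * g = 1 := by rw [← sq, hg]
  have hxx : x * x = 0 := by rw [← sq, hx]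
  have hggx : g * (g * x) = x := by rw [← mul_assoc, hgg, one_mul]
  have hxgx : x * (g * x) = 0 := by
    rw [← mul_assoc, hxg, neg_mul, mul_assoc, hxx, mul_zero, neg_zero]
  have hgxg : g * x * g = -x := by rw [mul_assoc, hxg, mul_neg, hggx]
  have hgxx : g * x * x = 0 := by rw [mul_assoc, hxx, mul_zero]
  have hgxgx : g * x * (g * x) = 0 := by rw [mul_assoc, hxgx, mul_zero]
  simp only [ofCoords, sq, mul_add, add_mul, smul_mul_smul_comm, one_mul, mul_one,
    hgg, hxx, hggx, hxg, hxgx, hgxg, hgxx, hgxgx]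
  module

theorem ofCoords_one_zero_zero_zero (g x : A) : ofCoords g x (1 : k) 0 0 0 = 1 := by
  simp [ofCoords]

theorem ofCoords_zero_one (g x : A) (r s : k) :
    ofCoords g x 0 1 r s = g + (r • x + s • (g * x)) := by
  simp only [ofCoords]
  module

theorem ofCoords_zero_neg_one (g x : A) (r s : k) :
    ofCoords g x 0 (-1) r s = -g + (r • x + s • (g * x)) := by
  simp only [ofCoords]
  module

theorem exists_eq_ofCoords {g x : A} (b : Module.Basis (Fin 4) k A)
    (hb0 : b 0 = 1) (hb1 : b 1 = g) (hb2 : b 2 = x) (hb3 : b 3 = g * x) (t : A) :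
    ∃ p q r s : k, t = ofCoords g x p q r s :=
  ⟨b.repr t 0, b.repr t 1, b.repr t 2, b.repr t 3, by
    rw [ofCoords, ← hb3, ← hb0, ← hb1, ← hb2]
    exact (b.sum_repr t).symm.trans (Fin.sum_univ_four _)⟩

theorem ofCoords_inj {g x : A} (b : Module.Basis (Fin 4) k A)
    (hb0 : b 0 = 1) (hb1 : b 1 = g) (hb2 : b 2 = x) (hb3 : b 3 = g * x)
    {p q r s p' q' r' s' : k} :
    ofCoords g x p q r s = ofCoords g x p' q' r' s' ↔
      p = p' ∧ q = q' ∧ r = r' ∧ s = s' := by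
  refine ⟨fun h => ?_, by rintro ⟨rfl, rfl, rfl, rfl⟩; rfl⟩
  rw [ofCoords, ofCoords, ← hb3, ← hb0, ← hb1, ← hb2] at h
  have hc (i : Fin 4) := congrArg (b.repr · i) h
  simp only [map_add, map_smul, Finsupp.add_apply, Finsupp.smul_apply, Module.Basis.repr_self,
    Finsupp.single_apply] at hc
  exact ⟨by simpa using hc 0, by simpa using hc 1, by simpa using hc 2, by simpa using hc 3⟩

end Coordinates

theorem coords_of_sq_eq_one [CommRing k] [NoZeroDivisors k] [NeZero (2 : k)] {p q r s : k}
    (h0 : p ^ 2 + q ^ 2 = 1) (h1 : 2 * p * q = 0) (h2 : 2 * p * r = 0) (h3 : 2 * p * s = 0) :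
    (p = 1 ∨ p = -1) ∧ q = 0 ∧ r = 0 ∧ s = 0 ∨ p = 0 ∧ (q = 1 ∨ q = -1) := by
  rcases eq_or_ne p 0 with rfl | hp
  · exact Or.inr ⟨rfl, mul_self_eq_one_iff.mp (by linear_combination h0)⟩
  · have h2p : 2 * p ≠ 0 := mul_ne_zero two_ne_zero hp
    obtain rfl : q = 0 := (mul_eq_zero.mp h1).resolve_left h2p
    exact Or.inl ⟨mul_self_eq_one_iff.mp (by linear_combination h0),
      rfl, (mul_eq_zero.mp h2).resolve_left h2p, (mul_eq_zero.mp h3).resolve_left h2p⟩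

end Sweedler

theorem sweedler_square_roots_of_one_general
    (k : Type*) [Field k] [CharZero k]
    (A : Type*) [Ring A] [Algebra k A]
    (g x : A) (hg : g ^ 2 = 1) (hx : x ^ 2 = 0) (hxg : x * g = -(g * x))
    (b : Module.Basis (Fin 4) k A)
    (hb0 : b 0 = 1) (hb1 : b 1 = g) (hb2 : b 2 = x) (hb3 : b 3 = g * x) :
    ∀ t : A, t ^ 2 = 1 ↔
      (t = 1 ∨ t = -1 ∨
        ∃ h ∈ Submodule.span k ({x, g * x} : Set A), t = g + h ∨ t = -g + h) := by
  intro t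
  constructor
  · obtain ⟨p, q, r, s, rfl⟩ := Sweedler.exists_eq_ofCoords b hb0 hb1 hb2 hb3 t
    rw [Sweedler.ofCoords_sq hg hx hxg, ← Sweedler.ofCoords_one_zero_zero_zero (k := k) g x,
      Sweedler.ofCoords_inj b hb0 hb1 hb2 hb3]
    rintro ⟨h0, h1, h2, h3⟩
    rcases Sweedler.coords_of_sq_eq_one h0 h1 h2 h3 with
      ⟨rfl | rfl, rfl, rfl, rfl⟩ | ⟨rfl, rfl | rfl⟩
    · exact Or.inl (by simp [Sweedler.ofCoords])
    · exact Or.inr (Or.inl (by simp [Sweedler.ofCoords]))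
    all_goals
      refine Or.inr (Or.inr ⟨r • x + s • (g * x), Submodule.mem_span_pair.mpr ⟨r, s, rfl⟩, ?_⟩)
    · exact Or.inl (Sweedler.ofCoords_zero_one g x r s)
    · exact Or.inr (Sweedler.ofCoords_zero_neg_one g x r s)
  · rintro (rfl | rfl | ⟨h, hh, rfl | rfl⟩)
    · exact one_pow 2
    · exact neg_one_sq
    all_goals obtain ⟨r, s, rfl⟩ := Submodule.mem_span_pair.mp hh
    · rw [← Sweedler.ofCoords_zero_one, Sweedler.ofCoords_sq hg hx hxg]
      simp [Sweedler.ofCoords]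
    · rw [← Sweedler.ofCoords_zero_neg_one, Sweedler.ofCoords_sq hg hx hxg]
      simp [Sweedler.ofCoords]

/-- In the Sweedler algebra `T₋₁`, the set of elements `t` with `t² = 1` is
exactly `{1, -1} ∪ {±g + h : h ∈ Rad T₋₁}`, where `Rad T₋₁ = k·x ⊕ k·gx`. -/
theorem sweedler_square_roots_of_one
    (k : Type*) [Field k] [IsAlgClosed k] [CharZero k]
    (A : Type*) [Ring A] [Algebra k A]
    (g x : A) (hg : g ^ 2 = 1) (hx : x ^ 2 = 0) (hxg : x * g = -(g * x))
    (b : Module.Basis (Fin 4) k A)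
    (hb0 : b 0 = 1) (hb1 : b 1 = g) (hb2 : b 2 = x) (hb3 : b 3 = g * x) :
    ∀ t : A, t ^ 2 = 1 ↔
      (t = 1 ∨ t = -1 ∨
        ∃ h ∈ Submodule.span k ({x, g * x} : Set A), t = g + h ∨ t = -g + h) :=
  sweedler_square_roots_of_one_general k A g x hg hx hxg b hb0 hb1 hb2 hb3
end

section
/- Up to isomorphism, the unique simple 2-dimensional representation of A''₄ = k⟨g,x | g⁴=1, x²=g²-1, gx=-xg⟩ is given by ρ(g) = diag(i,-i) and ρ(x) = [[0,2],[-1,0]], where i is a primitive 4th root of unity. -/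
/-- A matrix representation `ρ : B → M₂(k)` is irreducible if the only subspaces of `k²`
invariant under all `ρ(b)` are `⊥` and `⊤`. -/
def MatrixRepIrreducible {k : Type*} [Field k] {B : Type*} [Ring B] [Algebra k B]
    (ρ : B →ₐ[k] Matrix (Fin 2) (Fin 2) k) : Prop :=
  ∀ W : Submodule k (Fin 2 → k), (∀ a : B, ∀ v ∈ W, (ρ a).mulVec v ∈ W) → W = ⊥ ∨ W = ⊤

/-!
The defining relations rewrite a product of two basis monomials `gᵃxˢ` as a signed combination
of basis monomials by a formula valid in any ring, so every pair `(G, X)` satisfying them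
extends to an algebra map out of `A''₄`; for `G = diag(i, -i)`, `X = [[0, 2], [-1, 0]]` this is
`ρ₀`. As `g` and `x` generate, a 2-dimensional representation is simple iff `ρ g` and `ρ x`
have no common eigenvector. For `ρ₀` this follows from `G² = -1`, `X² = -2`, `GX = -XG`.
Conversely, for a simple `ρ` an eigenvector `v` of `G = ρ g` is not killed by `X = ρ x`, and its
eigenvalue `μ` has `μ² = -1`: otherwise `X²v = (μ² - 1)v = 0` makes `Xv` a common eigenvector.
Since `X` swaps the `μ`- and `-μ`-eigenspaces we get `u` with `Gu = iu`, and in the basis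
`(u, -Xu)` the pair `(G, X)` is the standard one.
-/

open Matrix

section Anticommuting

variable {S : Type*} [Ring S] {G X : S}

theorem mul_pow_of_anticomm (hGX : G * X = -(X * G)) (n : ℕ) :
    X * G ^ n = (-1 : ℤ) ^ n • (G ^ n * X) := by
  induction n with
  | zero => simp
  | succ n ih =>
    rw [pow_succ, ← mul_assoc, ih, smul_mul_assoc, mul_assoc, mul_assoc,
      ← neg_eq_iff_eq_neg.mpr hGX, pow_succ, mul_neg, smul_neg, mul_neg_one, neg_smul]

theorem pow_mul_pow_of_anticomm (hGX : G * X = -(X * G)) (m n : ℕ) :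
    X ^ m * G ^ n = (-1 : ℤ) ^ (m * n) • (G ^ n * X ^ m) := by
  induction m with
  | zero => simp
  | succ m ih =>
    rw [pow_succ, mul_assoc, mul_pow_of_anticomm hGX, mul_smul_comm, ← mul_assoc, ih,
      smul_mul_assoc, smul_smul, ← pow_add, mul_assoc, ← pow_succ, add_one_mul, add_comm]

theorem monomial_mul_monomial_of_anticomm (hGX : G * X = -(X * G)) (a s c d : ℕ) :
    G ^ a * X ^ s * (G ^ c * X ^ d) = (-1 : ℤ) ^ (s * c) • (G ^ (a + c) * X ^ (s + d)) := by
  rw [mul_assoc, ← mul_assoc (X ^ s), pow_mul_pow_of_anticomm hGX, smul_mul_assoc, mul_smul_comm,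
    pow_add, pow_add, mul_assoc, mul_assoc]

theorem pow_mul_pow_add_two_of_sq_eq (hX2 : X ^ 2 = G ^ 2 - 1) (hGX : G * X = -(X * G))
    (m n : ℕ) :
    G ^ m * X ^ (n + 2) = G ^ (m + 2) * X ^ n - G ^ m * X ^ n := by
  have hcomm : X ^ n * G ^ 2 = G ^ 2 * X ^ n := by
    rw [pow_mul_pow_of_anticomm hGX, mul_comm n 2, pow_mul, neg_one_sq, one_pow, one_smul]
  rw [pow_add X, hX2, mul_sub, hcomm, mul_one, mul_sub, ← mul_assoc, ← pow_add]

end Anticommuting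

structure IsA4ppPair {S : Type*} [Ring S] (G X : S) : Prop where
  pow_four : G ^ 4 = 1
  sq : X ^ 2 = G ^ 2 - 1
  anticomm : G * X = -(X * G)

theorem IsA4ppPair.map {S T F : Type*} [Ring S] [Ring T] [FunLike F S T] [RingHomClass F S T]
    {G X : S} (h : IsA4ppPair G X) (f : F) : IsA4ppPair (f G) (f X) where
  pow_four := by rw [← map_pow, h.pow_four, map_one]
  sq := by rw [← map_pow, h.sq, map_sub, map_pow, map_one]
  anticomm := by rw [← map_mul, h.anticomm, map_neg, map_mul]

theorem IsA4ppPair.of_sq_eq_neg_one {S : Type*} [Ring S] {G X : S} (hG2 : G ^ 2 = -1)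
    (hX2 : X ^ 2 = -2) (hGX : G * X = -(X * G)) : IsA4ppPair G X where
  pow_four := by rw [show 4 = 2 * 2 from rfl, pow_mul, hG2, neg_one_sq]
  sq := by rw [hX2, hG2]; norm_num
  anticomm := hGX

namespace A4pp

variable {k B A : Type*} [CommRing k] [Ring B] [Algebra k B] [Ring A] [Algebra k A]

theorem adjoin_eq_top {g x : B} (b : Module.Basis (Fin 4 × Fin 2) k B)
    (hb : ∀ p : Fin 4 × Fin 2, b p = g ^ (p.1 : ℕ) * x ^ (p.2 : ℕ)) :
    Algebra.adjoin k {g, x} = ⊤ := by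
  rw [← Algebra.toSubmodule_eq_top, eq_top_iff, ← b.span_eq, Submodule.span_le]
  rintro _ ⟨p, rfl⟩
  rw [hb]
  exact Subalgebra.mul_mem _ (Subalgebra.pow_mem _ (Algebra.subset_adjoin (by simp)) _)
    (Subalgebra.pow_mem _ (Algebra.subset_adjoin (by simp)) _)

noncomputable def liftLinear (b : Module.Basis (Fin 4 × Fin 2) k B) (G X : A) : B →ₗ[k] A :=
  b.constr k fun p => G ^ (p.1 : ℕ) * X ^ (p.2 : ℕ)

variable {g x : B} {b : Module.Basis (Fin 4 × Fin 2) k B} {G X : A}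

theorem liftLinear_monomial (hb : ∀ p : Fin 4 × Fin 2, b p = g ^ (p.1 : ℕ) * x ^ (p.2 : ℕ))
    (hgx : IsA4ppPair g x) (hGX : IsA4ppPair G X) (m n : ℕ) :
    liftLinear b G X (g ^ m * x ^ n) = G ^ m * X ^ n := by
  have reduced : ∀ n < 2, ∀ m, liftLinear b G X (g ^ m * x ^ n) = G ^ m * X ^ n := by
    intro n hn m
    have h := b.constr_basis k (fun p => G ^ (p.1 : ℕ) * X ^ (p.2 : ℕ))
      (⟨m % 4, Nat.mod_lt _ four_pos⟩, ⟨n, hn⟩)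
    rwa [hb, ← pow_eq_pow_mod m hgx.pow_four, ← pow_eq_pow_mod m hGX.pow_four] at h
  induction n using Nat.twoStepInduction generalizing m with
  | zero => exact reduced 0 two_pos m
  | one => exact reduced 1 one_lt_two m
  | more n ih _ =>
    rw [pow_mul_pow_add_two_of_sq_eq hgx.sq hgx.anticomm, map_sub, ih, ih,
      pow_mul_pow_add_two_of_sq_eq hGX.sq hGX.anticomm]

theorem liftLinear_mul (hb : ∀ p : Fin 4 × Fin 2, b p = g ^ (p.1 : ℕ) * x ^ (p.2 : ℕ))
    (hgx : IsA4ppPair g x) (hGX : IsA4ppPair G X) (u v : B) :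
    liftLinear b G X (u * v) = liftLinear b G X u * liftLinear b G X v := by
  suffices (LinearMap.mul k B).compr₂ (liftLinear b G X) =
      (LinearMap.mul k A).compl₁₂ (liftLinear b G X) (liftLinear b G X) from
    congr($this u v)
  refine LinearMap.ext_basis b b fun p q => ?_
  simp only [LinearMap.compr₂_apply, LinearMap.compl₁₂_apply, LinearMap.mul_apply', hb,
    monomial_mul_monomial_of_anticomm hgx.anticomm, map_zsmul, liftLinear_monomial hb hgx hGX,
    monomial_mul_monomial_of_anticomm hGX.anticomm]

noncomputable def lift (hb : ∀ p : Fin 4 × Fin 2, b p = g ^ (p.1 : ℕ) * x ^ (p.2 : ℕ))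
    (hgx : IsA4ppPair g x) (hGX : IsA4ppPair G X) : B →ₐ[k] A :=
  AlgHom.ofLinearMap (liftLinear b G X)
    (by simpa using liftLinear_monomial hb hgx hGX 0 0) (liftLinear_mul hb hgx hGX)

theorem lift_apply_g (hb : ∀ p : Fin 4 × Fin 2, b p = g ^ (p.1 : ℕ) * x ^ (p.2 : ℕ))
    (hgx : IsA4ppPair g x) (hGX : IsA4ppPair G X) : lift hb hgx hGX g = G := by
  simpa [lift] using liftLinear_monomial hb hgx hGX 1 0

theorem lift_apply_x (hb : ∀ p : Fin 4 × Fin 2, b p = g ^ (p.1 : ℕ) * x ^ (p.2 : ℕ))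
    (hgx : IsA4ppPair g x) (hGX : IsA4ppPair G X) : lift hb hgx hGX x = X := by
  simpa [lift] using liftLinear_monomial hb hgx hGX 0 1

end A4pp

section Irreducible

variable {k B : Type*} [Field k] [Ring B] [Algebra k B]

theorem matrixRepIrreducible_iff_of_adjoin_eq_top {s : Set B} (hs : Algebra.adjoin k s = ⊤)
    (ρ : B →ₐ[k] Matrix (Fin 2) (Fin 2) k) :
    MatrixRepIrreducible ρ ↔ ∀ W : Submodule k (Fin 2 → k),
      (∀ a ∈ s, ∀ v ∈ W, ρ a *ᵥ v ∈ W) → W = ⊥ ∨ W = ⊤ := by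
  refine ⟨fun h W hW => h W fun a => ?_, fun h W hW => h W fun a _ => hW a⟩
  have ha : a ∈ Algebra.adjoin k s := hs ▸ Algebra.mem_top
  induction ha using Algebra.adjoin_induction with
  | mem a ha => exact hW a ha
  | algebraMap r =>
    intro v hv
    rw [AlgHom.commutes, Algebra.algebraMap_eq_smul_one, smul_mulVec, one_mulVec]
    exact W.smul_mem r hv
  | add a c _ _ ha hc =>
    intro v hv
    rw [map_add, add_mulVec]
    exact W.add_mem (ha v hv) (hc v hv)
  | mul a c _ _ ha hc =>
    intro v hv
    rw [map_mul, ← mulVec_mulVec]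
    exact ha _ (hc v hv)

theorem forall_invariant_eq_bot_or_top_iff (S : Set (Matrix (Fin 2) (Fin 2) k)) :
    (∀ W : Submodule k (Fin 2 → k), (∀ M ∈ S, ∀ v ∈ W, M *ᵥ v ∈ W) → W = ⊥ ∨ W = ⊤) ↔
      ∀ v : Fin 2 → k, (∀ M ∈ S, M *ᵥ v ∈ k ∙ v) → v = 0 := by
  constructor
  · intro h v hv
    by_contra hv0
    have hinv : ∀ M ∈ S, ∀ w ∈ k ∙ v, M *ᵥ w ∈ k ∙ v := by
      intro M hM w hw
      obtain ⟨c, rfl⟩ := Submodule.mem_span_singleton.mp hw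
      rw [mulVec_smul]
      exact Submodule.smul_mem _ c (hv M hM)
    rcases h _ hinv with hbot | htop
    · exact hv0 (Submodule.span_singleton_eq_bot.mp hbot)
    · have := finrank_span_singleton (K := k) hv0
      rw [htop, finrank_top, Module.finrank_fin_fun] at this
      exact absurd this (by norm_num)
  · intro h W hW
    by_contra! hW'
    obtain ⟨v, hvW, hv0⟩ := (Submodule.ne_bot_iff W).mp hW'.1
    have hspan : k ∙ v = W := by
      refine Submodule.eq_of_le_of_finrank_le
        ((Submodule.span_singleton_le_iff_mem v W).mpr hvW) ?_
      have := Submodule.finrank_lt hW'.2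
      rw [Module.finrank_fin_fun] at this
      rw [finrank_span_singleton hv0]
      omega
    exact hv0 (h v fun M hM => hspan ▸ hW M hM v hvW)

theorem matrixRepIrreducible_iff_of_adjoin_pair_eq_top {g x : B}
    (hgen : Algebra.adjoin k {g, x} = ⊤) (ρ : B →ₐ[k] Matrix (Fin 2) (Fin 2) k) :
    MatrixRepIrreducible ρ ↔
      ∀ v : Fin 2 → k, ρ g *ᵥ v ∈ k ∙ v → ρ x *ᵥ v ∈ k ∙ v → v = 0 := by
  have h := forall_invariant_eq_bot_or_top_iff {ρ g, ρ x}
  simp only [Set.mem_insert_iff, Set.mem_singleton_iff, forall_eq_or_imp, forall_eq] at h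
  simpa only [matrixRepIrreducible_iff_of_adjoin_eq_top hgen, Set.mem_insert_iff,
    Set.mem_singleton_iff, forall_eq_or_imp, forall_eq, and_imp] using h

end Irreducible

section Eigenvectors

variable {k n : Type*} [Field k] [Fintype n] {G X : Matrix n n k} {v : n → k} {μ : k}

theorem mulVec_mulVec_eq_neg_smul_of_anticomm (hGX : G * X = -(X * G)) (hv : G *ᵥ v = μ • v) :
    G *ᵥ (X *ᵥ v) = (-μ) • (X *ᵥ v) := by
  rw [mulVec_mulVec, hGX, neg_mulVec, ← mulVec_mulVec, hv, mulVec_smul, neg_smul]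

theorem pow_mulVec_eq_pow_smul [DecidableEq n] (hv : G *ᵥ v = μ • v) (m : ℕ) :
    (G ^ m) *ᵥ v = μ ^ m • v := by
  induction m with
  | zero => simp
  | succ m ih => rw [pow_succ, ← mulVec_mulVec, hv, mulVec_smul, ih, smul_smul, pow_succ']

theorem eq_zero_of_mem_span_of_sq_eq_neg_one [DecidableEq n] (hG2 : G ^ 2 = -1)
    (hX2 : X ^ 2 = -2) (hGX : G * X = -(X * G)) (h2 : (2 : k) ≠ 0) (hGv : G *ᵥ v ∈ k ∙ v)
    (hXv : X *ᵥ v ∈ k ∙ v) : v = 0 := by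
  obtain ⟨μ, hμ⟩ := Submodule.mem_span_singleton.mp hGv
  obtain ⟨ν, hν⟩ := Submodule.mem_span_singleton.mp hXv
  by_contra hv
  have hμ2 : μ ^ 2 = -1 := smul_left_injective k hv <| by
    simpa [hG2, neg_mulVec] using (pow_mulVec_eq_pow_smul hμ.symm 2).symm
  have hν2 : ν ^ 2 = -2 := smul_left_injective k hv <| by
    simpa [hX2, neg_mulVec, ofNat_mulVec] using (pow_mulVec_eq_pow_smul hν.symm 2).symm
  have hμν : ν * μ = -(μ * ν) := smul_left_injective k hv <| by
    have := congrArg (· *ᵥ v) hGX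
    simp only [← mulVec_mulVec, neg_mulVec, ← hμ, ← hν, mulVec_smul, smul_smul] at this
    simpa only [neg_smul] using this
  -- `8 = 4 μ² ν² = (2 μ ν)² = 0`
  exact pow_ne_zero 3 h2 <| by
    linear_combination (2 * μ * ν) * hμν - 4 * ν ^ 2 * hμ2 + 4 * hν2

end Eigenvectors

theorem mul_transpose_of_mulVec_eq {k : Type*} [Field k] {M N : Matrix (Fin 2) (Fin 2) k}
    {u w : Fin 2 → k} (hu : M *ᵥ u = N 0 0 • u + N 1 0 • w)
    (hw : M *ᵥ w = N 0 1 • u + N 1 1 • w) :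
    M * (of ![u, w])ᵀ = (of ![u, w])ᵀ * N := by
  have hP : ∀ c : Fin 2 → k, (of ![u, w])ᵀ *ᵥ c = c 0 • u + c 1 • w := by
    intro c; ext r; simp [mulVec, dotProduct, Fin.sum_univ_two, mul_comm]
  refine ext_col fun j => ?_
  rw [← mulVec_single_one, ← mulVec_single_one, ← mulVec_mulVec, ← mulVec_mulVec, hP, hP]
  fin_cases j <;> simp [hu, hw]

namespace IsA4ppPair

variable {k : Type*} [Field k] {G X : Matrix (Fin 2) (Fin 2) k} {i : k}

theorem exists_mulVec_eq_smul [IsAlgClosed k] (h : IsA4ppPair G X)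
    (hirr : ∀ v, G *ᵥ v ∈ k ∙ v → X *ᵥ v ∈ k ∙ v → v = 0) (hi : i ^ 2 = -1) :
    ∃ u ≠ 0, G *ᵥ u = i • u := by
  obtain ⟨μ, hμ⟩ := Module.End.exists_eigenvalue (toLin' G)
  obtain ⟨v, hv⟩ := hμ.exists_hasEigenvector
  have hGv : G *ᵥ v = μ • v := by simpa using hv.apply_eq_smul
  have hker : ∀ w μ', G *ᵥ w = μ' • w → X *ᵥ w = 0 → w = 0 := fun w μ' hw hXw =>
    hirr w (Submodule.mem_span_singleton.mpr ⟨μ', hw.symm⟩) (hXw ▸ Submodule.zero_mem _)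
  have hXv : X *ᵥ v ≠ 0 := fun h0 => hv.2 (hker v μ hGv h0)
  have hGXv := mulVec_mulVec_eq_neg_smul_of_anticomm h.anticomm hGv
  have hXXv : X *ᵥ (X *ᵥ v) = (μ ^ 2 - 1) • v := by
    rw [mulVec_mulVec, ← pow_two, h.sq, sub_mulVec, pow_mulVec_eq_pow_smul hGv, one_mulVec,
      sub_smul, one_smul]
  have hμ4 : μ ^ 4 = 1 := smul_left_injective k hv.2 <| by
    simpa [h.pow_four] using (pow_mulVec_eq_pow_smul hGv 4).symm
  have hμ2 : μ ^ 2 = -1 := by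
    have hfac : (μ ^ 2 - 1) * (μ ^ 2 + 1) = 0 := by linear_combination hμ4
    rcases mul_eq_zero.mp hfac with h1 | h1
    · exact absurd (hker _ _ hGXv (by rw [hXXv, h1, zero_smul])) hXv
    · linear_combination h1
  rcases mul_eq_zero.mp (show (μ - i) * (μ + i) = 0 by linear_combination hμ2 - hi) with h1 | h1
  · exact ⟨v, hv.2, by rw [hGv, sub_eq_zero.mp h1]⟩
  · exact ⟨X *ᵥ v, hXv, by rw [hGXv, eq_neg_of_add_eq_zero_left h1, neg_neg]⟩

theorem exists_eq_conjAct_of_mulVec_eq_smul (h : IsA4ppPair G X) (h2 : (2 : k) ≠ 0)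
    (hi : i ^ 2 = -1) {u : Fin 2 → k} (hu : u ≠ 0) (hGu : G *ᵥ u = i • u) :
    ∃ P : GL (Fin 2) k,
      G = ConjAct.toConjAct P • !![i, 0; 0, -i] ∧ X = ConjAct.toConjAct P • !![0, 2; -1, 0] := by
  obtain ⟨w, hXu⟩ : ∃ w, X *ᵥ u = -w := ⟨-(X *ᵥ u), (neg_neg _).symm⟩
  have hGw : G *ᵥ w = (-i) • w := by
    rw [← neg_neg w, ← hXu, mulVec_neg, mulVec_mulVec_eq_neg_smul_of_anticomm h.anticomm hGu,
      smul_neg]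
  have hXw : X *ᵥ w = (2 : k) • u := by
    rw [← neg_neg w, ← hXu, mulVec_neg, mulVec_mulVec, ← pow_two, h.sq, sub_mulVec,
      pow_mulVec_eq_pow_smul hGu, hi, one_mulVec]
    module
  have hw : w ≠ 0 := by
    rintro rfl
    rw [mulVec_zero, eq_comm, smul_eq_zero] at hXw
    exact hu (hXw.resolve_left h2)
  have hind : LinearIndependent k ![u, w] := by
    refine LinearIndependent.pair_iff.mpr fun s t hst => ?_
    have hG := congrArg (G *ᵥ ·) hst
    simp only [mulVec_add, mulVec_smul, hGu, hGw, mulVec_zero] at hG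
    have hs : (2 * i * s) • u = 0 := by linear_combination (norm := module) i • hst + hG
    have hi0 : i ≠ 0 := by rintro rfl; simp at hi
    obtain rfl : s = 0 := by simpa [h2, hi0, hu] using hs
    simpa [hw] using hst
  have hP : IsUnit (of ![u, w])ᵀ := linearIndependent_cols_iff_isUnit.mp hind
  refine ⟨hP.unit, ?_, ?_⟩ <;>
    rw [ConjAct.units_smul_def, ConjAct.ofConjAct_toConjAct, Units.eq_mul_inv_iff_mul_eq,
      IsUnit.unit_spec] <;>
    refine mul_transpose_of_mulVec_eq ?_ ?_ <;> simp [hGu, hGw, hXu, hXw]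

end IsA4ppPair

theorem standard_pair_relations {k : Type*} [Field k] {i : k} (hi : i ^ 2 = -1) :
    !![i, 0; 0, -i] ^ 2 = -1 ∧ !![(0 : k), 2; -1, 0] ^ 2 = -2 ∧
      !![i, 0; 0, -i] * !![0, 2; -1, 0] = -(!![0, 2; -1, 0] * !![i, 0; 0, -i]) := by
  have hii : i * i = -1 := by rw [← sq, hi]
  refine ⟨?_, ?_, ?_⟩ <;> ext r s <;> fin_cases r <;> fin_cases s <;>
    simp [sq, ofNat_apply, hii, mul_comm]

theorem A4pp_unique_simple_two_dimensional_rep_general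
    (k : Type*) [Field k] [IsAlgClosed k]
    (i : k) (hi : IsPrimitiveRoot i 4)
    (B : Type*) [Ring B] [Algebra k B]
    (g x : B) (hg : g ^ 4 = 1) (hx : x ^ 2 = g ^ 2 - 1) (hgx : g * x = -(x * g))
    (b : Module.Basis (Fin 4 × Fin 2) k B)
    (hb : ∀ p : Fin 4 × Fin 2, b p = g ^ (p.1 : ℕ) * x ^ (p.2 : ℕ)) :
    ∃ ρ₀ : B →ₐ[k] Matrix (Fin 2) (Fin 2) k,
      ρ₀ g = !![i, 0; 0, -i] ∧ ρ₀ x = !![0, 2; -1, 0] ∧ MatrixRepIrreducible ρ₀ ∧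
      ∀ ρ : B →ₐ[k] Matrix (Fin 2) (Fin 2) k, MatrixRepIrreducible ρ →
        ∃ P : GL (Fin 2) k, ∀ a : B,
          ρ a = (P : Matrix (Fin 2) (Fin 2) k) * ρ₀ a * ((P⁻¹ : GL (Fin 2) k) : Matrix (Fin 2) (Fin 2) k) := by
  have hi' : IsPrimitiveRoot (i ^ 2) 2 := hi.pow four_pos (by norm_num)
  have hi2 : i ^ 2 = -1 := hi'.eq_neg_one_of_two_right
  have h2 : (2 : k) ≠ 0 := fun h => hi'.ne_one one_lt_two (by linear_combination hi2 - h)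
  obtain ⟨hG₀, hX₀, hGX₀⟩ := standard_pair_relations hi2
  have hrel : IsA4ppPair g x := ⟨hg, hx, hgx⟩
  have hgen := A4pp.adjoin_eq_top b hb
  set ρ₀ := A4pp.lift hb hrel (.of_sq_eq_neg_one hG₀ hX₀ hGX₀)
  have hρ₀g : ρ₀ g = !![i, 0; 0, -i] := A4pp.lift_apply_g ..
  have hρ₀x : ρ₀ x = !![0, 2; -1, 0] := A4pp.lift_apply_x ..
  refine ⟨ρ₀, hρ₀g, hρ₀x, ?_, fun ρ hρ => ?_⟩
  · rw [matrixRepIrreducible_iff_of_adjoin_pair_eq_top hgen, hρ₀g, hρ₀x]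
    exact fun v => eq_zero_of_mem_span_of_sq_eq_neg_one hG₀ hX₀ hGX₀ h2
  rw [matrixRepIrreducible_iff_of_adjoin_pair_eq_top hgen] at hρ
  obtain ⟨u, hu, hGu⟩ := (hrel.map ρ).exists_mulVec_eq_smul hρ hi2
  obtain ⟨P, hPg, hPx⟩ := (hrel.map ρ).exists_eq_conjAct_of_mulVec_eq_smul h2 hi2 hu hGu
  let conj := (MulSemiringAction.toAlgEquiv k (Matrix (Fin 2) (Fin 2) k) (ConjAct.toConjAct P))
  have hρ : ρ = conj.toAlgHom.comp ρ₀ := by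
    refine AlgHom.ext_of_adjoin_eq_top hgen ?_
    rintro _ (rfl | rfl)
    · exact hPg.trans (congrArg conj hρ₀g.symm)
    · exact hPx.trans (congrArg conj hρ₀x.symm)
  exact ⟨P, fun a => congr($hρ a)⟩

/-- Up to isomorphism, the unique simple 2-dimensional representation of
`A''₄ = k⟨g,x | g⁴=1, x²=g²-1, gx=-xg⟩` is given by `ρ(g) = diag(i,-i)` and
`ρ(x) = [[0,2],[-1,0]]`, where `i` is a primitive 4th root of unity. -/
theorem A4pp_unique_simple_two_dimensional_rep
    (k : Type*) [Field k] [IsAlgClosed k] [CharZero k]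
    (i : k) (hi : IsPrimitiveRoot i 4)
    (B : Type*) [Ring B] [Algebra k B]
    (g x : B) (hg : g ^ 4 = 1) (hx : x ^ 2 = g ^ 2 - 1) (hgx : g * x = -(x * g))
    (b : Module.Basis (Fin 4 × Fin 2) k B)
    (hb : ∀ p : Fin 4 × Fin 2, b p = g ^ (p.1 : ℕ) * x ^ (p.2 : ℕ)) :
    ∃ ρ₀ : B →ₐ[k] Matrix (Fin 2) (Fin 2) k,
      ρ₀ g = !![i, 0; 0, -i] ∧ ρ₀ x = !![0, 2; -1, 0] ∧ MatrixRepIrreducible ρ₀ ∧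
      ∀ ρ : B →ₐ[k] Matrix (Fin 2) (Fin 2) k, MatrixRepIrreducible ρ →
        ∃ P : GL (Fin 2) k, ∀ a : B,
          ρ a = (P : Matrix (Fin 2) (Fin 2) k) * ρ₀ a * ((P⁻¹ : GL (Fin 2) k) : Matrix (Fin 2) (Fin 2) k) :=
  A4pp_unique_simple_two_dimensional_rep_general k i hi B g x hg hx hgx b hb
end

section
/- The matrices G = diag(i,-i) and X = [[0,2],[-1,0]] in M₂(k) satisfy G⁴ = I, X² = G² - I, and GX + XG = 0; hence they define an algebra homomorphism A''₄ → M₂(k), and this representation is irreducible. -/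
theorem mul_pow_eq_zsmul_pow_mul {R : Type*} [Ring R] {g x : R} (hgx : g * x = -(x * g))
    (a : ℕ) : x * g ^ a = (-1 : ℤ) ^ a • (g ^ a * x) := by
  have hxg : SemiconjBy x g (-g) := by
    rw [SemiconjBy, neg_mul, hgx, neg_neg]
  rw [(hxg.pow_right a).eq, neg_pow, zsmul_eq_mul, mul_assoc]
  push_cast
  rfl

theorem pow_mul_pow_add_two {R : Type*} [Ring R] {g x : R} (hx : x ^ 2 = g ^ 2 - 1) (n m : ℕ) :
    g ^ n * x ^ (m + 2) = g ^ (n + 2) * x ^ m - g ^ n * x ^ m := by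
  rw [add_comm m, pow_add, hx, ← mul_assoc, mul_sub, mul_one, ← pow_add, sub_mul]

theorem pow_mul_eq_of_mul_eq {M N : Type*} [Monoid M] [Monoid N] {f : M → N} {u : M} {U : N}
    (h : ∀ v, f (u * v) = U * f v) (n : ℕ) (v : M) : f (u ^ n * v) = U ^ n * f v := by
  induction n generalizing v with
  | zero => simp
  | succ n ih => rw [pow_succ', mul_assoc, h, ih, ← mul_assoc, ← pow_succ']

theorem Module.Basis.map_mul_left_of_forall {R A B ι : Type*} [CommSemiring R] [Semiring A]
    [Algebra R A] [Semiring B] [Algebra R B] (b : Module.Basis ι R A) (f : A →ₗ[R] B) {u : A}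
    {U : B} (h : ∀ i, f (u * b i) = U * f (b i)) (v : A) : f (u * v) = U * f v :=
  LinearMap.congr_fun
    (b.ext (f₁ := f ∘ₗ LinearMap.mulLeft R u) (f₂ := LinearMap.mulLeft R U ∘ₗ f) h) v

theorem Module.Basis.map_mul_of_forall {R A B ι : Type*} [CommSemiring R] [Semiring A]
    [Algebra R A] [Semiring B] [Algebra R B] (b : Module.Basis ι R A) (f : A →ₗ[R] B)
    (h : ∀ i v, f (b i * v) = f (b i) * f v) (u v : A) : f (u * v) = f u * f v :=
  LinearMap.congr_fun (b.ext (f₁ := f ∘ₗ LinearMap.mulRight R v)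
    (f₂ := LinearMap.mulRight R (f v) ∘ₗ f) fun i => h i v) u

section PowMulPowBasis

variable {k B A : Type*} [CommRing k] [Ring B] [Algebra k B] [Ring A] [Algebra k A] {N : ℕ}
  {b : Module.Basis (Fin N × Fin 2) k B} {g x : B} {G X : A}

variable (b G X) in
noncomputable def powMulPowLift : B →ₗ[k] A :=
  b.constr k fun p => G ^ (p.1 : ℕ) * X ^ (p.2 : ℕ)

theorem powMulPowLift_basis (p : Fin N × Fin 2) :
    powMulPowLift b G X (b p) = G ^ (p.1 : ℕ) * X ^ (p.2 : ℕ) :=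
  b.constr_basis k _ p

theorem powMulPowLift_pow_mul_pow [NeZero N]
    (hb : ∀ p : Fin N × Fin 2, b p = g ^ (p.1 : ℕ) * x ^ (p.2 : ℕ)) (hg : g ^ N = 1)
    (hx : x ^ 2 = g ^ 2 - 1) (hG : G ^ N = 1) (hX : X ^ 2 = G ^ 2 - 1) (n m : ℕ) :
    powMulPowLift b G X (g ^ n * x ^ m) = G ^ n * X ^ m := by
  induction m using Nat.strong_induction_on generalizing n with
  | _ m ih =>
  obtain hm | ⟨m, rfl⟩ : m < 2 ∨ ∃ m', m = m' + 2 :=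
    (lt_or_ge m 2).imp_right fun h => ⟨m - 2, by omega⟩
  · have hbasis : g ^ n * x ^ m = b (⟨n % N, Nat.mod_lt n (NeZero.pos N)⟩, ⟨m, hm⟩) := by
      rw [hb, pow_eq_pow_mod n hg]
    rw [hbasis, powMulPowLift_basis, pow_eq_pow_mod n hG]
  · rw [pow_mul_pow_add_two hx, map_sub, ih m (by omega), ih m (by omega),
      pow_mul_pow_add_two hX]

theorem powMulPowLift_g_mul [NeZero N]
    (hb : ∀ p : Fin N × Fin 2, b p = g ^ (p.1 : ℕ) * x ^ (p.2 : ℕ)) (hg : g ^ N = 1)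
    (hx : x ^ 2 = g ^ 2 - 1) (hG : G ^ N = 1) (hX : X ^ 2 = G ^ 2 - 1) (v : B) :
    powMulPowLift b G X (g * v) = G * powMulPowLift b G X v := by
  refine b.map_mul_left_of_forall _ (fun p => ?_) v
  rw [hb, ← mul_assoc, ← pow_succ', powMulPowLift_pow_mul_pow hb hg hx hG hX,
    powMulPowLift_pow_mul_pow hb hg hx hG hX, pow_succ', mul_assoc]

theorem powMulPowLift_x_mul [NeZero N]
    (hb : ∀ p : Fin N × Fin 2, b p = g ^ (p.1 : ℕ) * x ^ (p.2 : ℕ)) (hg : g ^ N = 1)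
    (hx : x ^ 2 = g ^ 2 - 1) (hgx : g * x = -(x * g)) (hG : G ^ N = 1)
    (hX : X ^ 2 = G ^ 2 - 1) (hGX : G * X = -(X * G)) (v : B) :
    powMulPowLift b G X (x * v) = X * powMulPowLift b G X v := by
  refine b.map_mul_left_of_forall _ (fun p => ?_) v
  rw [hb, ← mul_assoc, mul_pow_eq_zsmul_pow_mul hgx, smul_mul_assoc, mul_assoc, ← pow_succ',
    map_zsmul, powMulPowLift_pow_mul_pow hb hg hx hG hX,
    powMulPowLift_pow_mul_pow hb hg hx hG hX, ← mul_assoc, mul_pow_eq_zsmul_pow_mul hGX,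
    smul_mul_assoc, mul_assoc, ← pow_succ']

theorem exists_algHom_of_powMulPow_basis [NeZero N]
    (hb : ∀ p : Fin N × Fin 2, b p = g ^ (p.1 : ℕ) * x ^ (p.2 : ℕ)) (hg : g ^ N = 1)
    (hx : x ^ 2 = g ^ 2 - 1) (hgx : g * x = -(x * g)) (hG : G ^ N = 1)
    (hX : X ^ 2 = G ^ 2 - 1) (hGX : G * X = -(X * G)) :
    ∃ ρ : B →ₐ[k] A, ρ g = G ∧ ρ x = X := by
  have hF := powMulPowLift_pow_mul_pow (b := b) hb hg hx hG hX
  have hmul : ∀ u v,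
      powMulPowLift b G X (u * v) = powMulPowLift b G X u * powMulPowLift b G X v := by
    refine b.map_mul_of_forall _ fun p v => ?_
    rw [hb, mul_assoc, pow_mul_eq_of_mul_eq (powMulPowLift_g_mul hb hg hx hG hX),
      pow_mul_eq_of_mul_eq (powMulPowLift_x_mul hb hg hx hgx hG hX hGX), hF, mul_assoc]
  refine ⟨AlgHom.ofLinearMap _ ?_ hmul, ?_, ?_⟩
  · simpa using hF 0 0
  · simpa using hF 1 0
  · simpa using hF 0 1

end PowMulPowBasis

section TwoDim

open Matrix

variable {k : Type*} [Field k] {W : Submodule k (Fin 2 → k)}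

theorem exists_single_mem_of_diag_invariant (hW : W ≠ ⊥) {d₀ d₁ : k} (hd : d₀ ≠ d₁)
    (hD : ∀ v ∈ W, !![d₀, 0; 0, d₁] *ᵥ v ∈ W) : ∃ j, Pi.single j 1 ∈ W := by
  obtain ⟨v, hv, hv0⟩ := W.exists_mem_ne_zero_of_ne_bot hW
  have h₀ : !![d₀, 0; 0, d₁] *ᵥ v - d₁ • v = ((d₀ - d₁) * v 0) • Pi.single 0 1 := by
    ext j; fin_cases j <;> simp [vecHead, vecTail, sub_mul]
  have h₁ : !![d₀, 0; 0, d₁] *ᵥ v - d₀ • v = ((d₁ - d₀) * v 1) • Pi.single 1 1 := by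
    ext j; fin_cases j <;> simp [vecHead, vecTail, sub_mul]
  by_cases hv₀ : v 0 = 0
  · have hv₁ : v 1 ≠ 0 := fun hv₁ => hv0 (by ext j; fin_cases j <;> assumption)
    refine ⟨1, (W.smul_mem_iff (mul_ne_zero (sub_ne_zero.2 hd.symm) hv₁)).1 ?_⟩
    rw [← h₁]
    exact W.sub_mem (hD v hv) (W.smul_mem d₀ hv)
  · refine ⟨0, (W.smul_mem_iff (mul_ne_zero (sub_ne_zero.2 hd) hv₀)).1 ?_⟩
    rw [← h₀]
    exact W.sub_mem (hD v hv) (W.smul_mem d₁ hv)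

theorem eq_top_of_single_mem_of_antidiag_invariant {j : Fin 2} (hj : Pi.single j 1 ∈ W)
    {a c : k} (ha : a ≠ 0) (hc : c ≠ 0) (hA : ∀ v ∈ W, !![0, a; c, 0] *ᵥ v ∈ W) : W = ⊤ := by
  have hswap : ∀ i, Pi.single i 1 ∈ W → Pi.single (1 - i) 1 ∈ W := by
    intro i hi
    have := hA _ hi
    fin_cases i
    · exact (W.smul_mem_iff hc).1 (by convert this using 1; ext j; fin_cases j <;> simp)
    · exact (W.smul_mem_iff ha).1 (by convert this using 1; ext j; fin_cases j <;> simp)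
  have hsingle : ∀ i, Pi.single i 1 ∈ W := by
    intro i
    rcases (show i = j ∨ i = 1 - j by omega) with rfl | rfl
    · exact hj
    · exact hswap j hj
  rw [eq_top_iff, ← (Pi.basisFun k (Fin 2)).span_eq, Submodule.span_le]
  rintro _ ⟨i, rfl⟩
  simpa using hsingle i

theorem eq_bot_or_eq_top_of_diag_antidiag_invariant {d₀ d₁ a c : k} (hd : d₀ ≠ d₁)
    (ha : a ≠ 0) (hc : c ≠ 0) (hD : ∀ v ∈ W, !![d₀, 0; 0, d₁] *ᵥ v ∈ W)
    (hA : ∀ v ∈ W, !![0, a; c, 0] *ᵥ v ∈ W) : W = ⊥ ∨ W = ⊤ :=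
  or_iff_not_imp_left.2 fun hW =>
    let ⟨_, hj⟩ := exists_single_mem_of_diag_invariant hW hd hD
    eq_top_of_single_mem_of_antidiag_invariant hj ha hc hA

end TwoDim

theorem A4pp_standard_matrices_general
    (k : Type*) [Field k]
    (i : k) (hi : IsPrimitiveRoot i 4)
    (B : Type*) [Ring B] [Algebra k B]
    (g x : B) (hg : g ^ 4 = 1) (hx : x ^ 2 = g ^ 2 - 1) (hgx : g * x = -(x * g))
    (b : Module.Basis (Fin 4 × Fin 2) k B)
    (hb : ∀ p : Fin 4 × Fin 2, b p = g ^ (p.1 : ℕ) * x ^ (p.2 : ℕ))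
    (G X : Matrix (Fin 2) (Fin 2) k)
    (hG : G = !![i, 0; 0, -i]) (hX : X = !![0, 2; -1, 0]) :
    G ^ 4 = 1 ∧ X ^ 2 = G ^ 2 - 1 ∧ G * X + X * G = 0 ∧
    (∃ ρ : B →ₐ[k] Matrix (Fin 2) (Fin 2) k, ρ g = G ∧ ρ x = X ∧ MatrixRepIrreducible ρ) := by
  have hsq : IsPrimitiveRoot (i ^ 2) 2 := hi.pow_of_dvd two_ne_zero (by norm_num)
  have hi2 : i ^ 2 = -1 := hsq.eq_neg_one_of_two_right
  -- `i² = -1 ≠ 1` rules out characteristic 2, giving `i ≠ -i` and `2 ≠ 0` below.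
  have hneg_one : (-1 : k) ≠ 1 := hi2 ▸ hsq.ne_one one_lt_two
  have hG2 : G ^ 2 = -1 := by
    subst hG; ext a c; fin_cases a <;> fin_cases c <;> simp [sq, ← hi2]
  have hG4 : G ^ 4 = 1 := by rw [show 4 = 2 * 2 from rfl, pow_mul, hG2, neg_one_sq]
  have hX2 : X ^ 2 = G ^ 2 - 1 := by
    rw [hG2, hX]; ext a c; fin_cases a <;> fin_cases c <;> simp [sq] <;> norm_num
  have hGX : G * X = -(X * G) := by
    rw [hG, hX]; ext a c; fin_cases a <;> fin_cases c <;> simp [mul_comm]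
  obtain ⟨ρ, hρg, hρx⟩ := exists_algHom_of_powMulPow_basis hb hg hx hgx hG4 hX2 hGX
  refine ⟨hG4, hX2, by rw [hGX, neg_add_cancel], ρ, hρg, hρx, fun W hW => ?_⟩
  refine eq_bot_or_eq_top_of_diag_antidiag_invariant (d₀ := i) (d₁ := -i) (a := 2) (c := -1)
    (fun h => hneg_one (by linear_combination i * h - 2 * hi2))
    (fun h => hneg_one (by linear_combination -h)) (neg_ne_zero.2 one_ne_zero) ?_ ?_
  · simpa only [hρg, hG] using hW g
  · simpa only [hρx, hX] using hW x

/-- The matrices `G = diag(i,-i)` and `X = [[0,2],[-1,0]]` satisfy `G⁴ = I`,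
`X² = G² - I` and `GX + XG = 0`; hence they define an algebra homomorphism
`A''₄ → M₂(k)`, and this representation is irreducible. -/
theorem A4pp_standard_matrices
    (k : Type*) [Field k] [IsAlgClosed k] [CharZero k]
    (i : k) (hi : IsPrimitiveRoot i 4)
    (B : Type*) [Ring B] [Algebra k B]
    (g x : B) (hg : g ^ 4 = 1) (hx : x ^ 2 = g ^ 2 - 1) (hgx : g * x = -(x * g))
    (b : Module.Basis (Fin 4 × Fin 2) k B)
    (hb : ∀ p : Fin 4 × Fin 2, b p = g ^ (p.1 : ℕ) * x ^ (p.2 : ℕ))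
    (G X : Matrix (Fin 2) (Fin 2) k)
    (hG : G = !![i, 0; 0, -i]) (hX : X = !![0, 2; -1, 0]) :
    G ^ 4 = 1 ∧ X ^ 2 = G ^ 2 - 1 ∧ G * X + X * G = 0 ∧
    (∃ ρ : B →ₐ[k] Matrix (Fin 2) (Fin 2) k, ρ g = G ∧ ρ x = X ∧ MatrixRepIrreducible ρ) :=
  A4pp_standard_matrices_general k i hi B g x hg hx hgx b hb G X hG hX
end

section
/- Let e_{ij} = E_{ij}∘ρ be the comatrix elements of A = (A''₄)* arising from the simple 2-dimensional representation ρ of A''₄ with ρ(g)=diag(ξ,-ξ) (ξ a primitive 4th root of 1) and ρ(x)=[[0,2],[-1,0]]. Then under the convolution product of A: e₁₁² = e₂₂² = α, e₁₂² = e₂₁² = 0, where α is the character g↦-1, x↦0. -/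
/-!
Both sides are linear, so it suffices to compare them on the basis `gᵐ xʲ`. There
`Δ(gᵐ) = gᵐ ⊗ gᵐ` and `Δ(gᵐ x) = gᵐ x ⊗ gᵐ⁺¹ + gᵐ ⊗ gᵐ x`, while `ρ(gᵐ)` is diagonal and
`ρ(gᵐ x)` has zero diagonal. Hence `e_ii²(gᵐ) = (ρ(g)_ii²)ᵐ = (-1)ᵐ = α(gᵐ)` and
`e_ii²(gᵐ x) = 0 = α(gᵐ x)`, while for `i ≠ j` each term of `e_ij²` contains an off-diagonal
entry of some `ρ(gᵐ)`.
-/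

open TensorProduct

/-- The convolution product on the dual of a coalgebra. -/
noncomputable def convProd (k : Type*) [CommRing k] {B : Type*} [AddCommGroup B] [Module k B]
    [Coalgebra k B] (f h : B →ₗ[k] k) : B →ₗ[k] k :=
  (LinearMap.mul' k k) ∘ₗ (TensorProduct.map f h) ∘ₗ Coalgebra.comul

open Matrix

section Convolution

variable {k : Type*} [CommRing k] {B : Type*} [AddCommGroup B] [Module k B] [Coalgebra k B]

theorem convProd_apply_of_comul_eq_tmul {a : B} (ha : Coalgebra.comul (R := k) a = a ⊗ₜ[k] a)
    (f h : B →ₗ[k] k) : convProd k f h a = f a * h a := by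
  simp [convProd, ha]

theorem convProd_apply_of_comul_eq_add {y u v : B}
    (hy : Coalgebra.comul (R := k) y = y ⊗ₜ[k] u + v ⊗ₜ[k] y) (f h : B →ₗ[k] k) :
    convProd k f h y = f y * h u + f v * h y := by
  simp [convProd, hy]

end Convolution

section SkewPrimitive

variable {k : Type*} [CommRing k] {B : Type*} [Ring B] [Bialgebra k B]

theorem comul_pow_of_comul_eq_tmul {g : B} (hg : Coalgebra.comul (R := k) g = g ⊗ₜ[k] g)
    (m : ℕ) : Coalgebra.comul (R := k) (g ^ m) = (g ^ m) ⊗ₜ[k] (g ^ m) := by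
  rw [Bialgebra.comul_pow, hg, Algebra.TensorProduct.tmul_pow]

theorem comul_pow_mul_of_comul_eq_add {g x : B} (hg : Coalgebra.comul (R := k) g = g ⊗ₜ[k] g)
    (hx : Coalgebra.comul (R := k) x = x ⊗ₜ[k] g + 1 ⊗ₜ[k] x) (m : ℕ) :
    Coalgebra.comul (R := k) (g ^ m * x) = (g ^ m * x) ⊗ₜ[k] (g ^ (m + 1)) +
      (g ^ m) ⊗ₜ[k] (g ^ m * x) := by
  rw [Bialgebra.comul_mul, comul_pow_of_comul_eq_tmul hg, hx, mul_add,
    Algebra.TensorProduct.tmul_mul_tmul, Algebra.TensorProduct.tmul_mul_tmul, mul_one, pow_succ]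

end SkewPrimitive

theorem Module.Basis.ext_pow_mul {k B M : Type*} [CommRing k] [Ring B] [Algebra k B]
    [AddCommGroup M] [Module k M] {N : ℕ} {g x : B} (b : Module.Basis (Fin N × Fin 2) k B)
    (hb : ∀ p : Fin N × Fin 2, b p = g ^ (p.1 : ℕ) * x ^ (p.2 : ℕ)) {φ ψ : B →ₗ[k] M}
    (hpow : ∀ m : ℕ, φ (g ^ m) = ψ (g ^ m)) (hpow_mul : ∀ m : ℕ, φ (g ^ m * x) = ψ (g ^ m * x)) :
    φ = ψ := by
  refine b.ext fun ⟨m, j⟩ => ?_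
  fin_cases j
  · simpa [hb] using hpow m
  · simpa [hb] using hpow_mul m

section MatrixCoeff

variable {k : Type*} [CommRing k] {B : Type*} [Ring B] [Bialgebra k B]
  {n : Type*} [Fintype n] [DecidableEq n]

def matrixCoeff (ρ : B →ₐ[k] Matrix n n k) (i j : n) : B →ₗ[k] k :=
  entryLinearMap k k i j ∘ₗ ρ.toLinearMap

@[simp]
theorem matrixCoeff_apply (ρ : B →ₐ[k] Matrix n n k) (i j : n) (a : B) :
    matrixCoeff ρ i j a = ρ a i j :=
  rfl

variable (ρ : B →ₐ[k] Matrix n n k) {g x : B} {d : n → k}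

theorem map_pow_of_eq_diagonal (hρg : ρ g = diagonal d) (m : ℕ) :
    ρ (g ^ m) = diagonal (d ^ m) := by
  rw [map_pow, hρg, diagonal_pow]

theorem map_pow_mul_apply_self (hρg : ρ g = diagonal d) (hρx : ∀ i, ρ x i i = 0) (m : ℕ)
    (i : n) : ρ (g ^ m * x) i i = 0 := by
  rw [map_mul, map_pow_of_eq_diagonal ρ hρg, diagonal_mul, hρx, mul_zero]

theorem convProd_matrixCoeff_self_pow (hcg : Coalgebra.comul (R := k) g = g ⊗ₜ[k] g)
    (hρg : ρ g = diagonal d) (i : n) (m : ℕ) :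
    convProd k (matrixCoeff ρ i i) (matrixCoeff ρ i i) (g ^ m) = (d i ^ 2) ^ m := by
  rw [convProd_apply_of_comul_eq_tmul (comul_pow_of_comul_eq_tmul hcg m), matrixCoeff_apply,
    map_pow_of_eq_diagonal ρ hρg, diagonal_apply_eq, Pi.pow_apply, ← sq, ← pow_mul, ← pow_mul,
    mul_comm]

theorem convProd_matrixCoeff_pow_of_ne (hcg : Coalgebra.comul (R := k) g = g ⊗ₜ[k] g)
    (hρg : ρ g = diagonal d) {i j : n} (hij : i ≠ j) (m : ℕ) :
    convProd k (matrixCoeff ρ i j) (matrixCoeff ρ i j) (g ^ m) = 0 := by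
  rw [convProd_apply_of_comul_eq_tmul (comul_pow_of_comul_eq_tmul hcg m), matrixCoeff_apply,
    map_pow_of_eq_diagonal ρ hρg, diagonal_apply_ne _ hij, zero_mul]

theorem convProd_matrixCoeff_self_pow_mul (hcg : Coalgebra.comul (R := k) g = g ⊗ₜ[k] g)
    (hcx : Coalgebra.comul (R := k) x = x ⊗ₜ[k] g + 1 ⊗ₜ[k] x) (hρg : ρ g = diagonal d)
    (hρx : ∀ i, ρ x i i = 0) (i : n) (m : ℕ) :
    convProd k (matrixCoeff ρ i i) (matrixCoeff ρ i i) (g ^ m * x) = 0 := by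
  simp only [convProd_apply_of_comul_eq_add (comul_pow_mul_of_comul_eq_add hcg hcx m),
    matrixCoeff_apply, map_pow_mul_apply_self ρ hρg hρx, zero_mul, mul_zero, add_zero]

theorem convProd_matrixCoeff_pow_mul_of_ne (hcg : Coalgebra.comul (R := k) g = g ⊗ₜ[k] g)
    (hcx : Coalgebra.comul (R := k) x = x ⊗ₜ[k] g + 1 ⊗ₜ[k] x) (hρg : ρ g = diagonal d)
    {i j : n} (hij : i ≠ j) (m : ℕ) :
    convProd k (matrixCoeff ρ i j) (matrixCoeff ρ i j) (g ^ m * x) = 0 := by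
  simp only [convProd_apply_of_comul_eq_add (comul_pow_mul_of_comul_eq_add hcg hcx m),
    matrixCoeff_apply, map_pow_of_eq_diagonal ρ hρg, diagonal_apply_ne _ hij, zero_mul, mul_zero,
    add_zero]

variable {N : ℕ} (b : Module.Basis (Fin N × Fin 2) k B)

theorem convProd_matrixCoeff_self_eq (hb : ∀ p : Fin N × Fin 2, b p = g ^ (p.1 : ℕ) * x ^ (p.2 : ℕ))
    (hcg : Coalgebra.comul (R := k) g = g ⊗ₜ[k] g)
    (hcx : Coalgebra.comul (R := k) x = x ⊗ₜ[k] g + 1 ⊗ₜ[k] x) (hρg : ρ g = diagonal d)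
    (hρx : ∀ i, ρ x i i = 0) (α : B →ₐ[k] k) (i : n) (hαg : α g = d i ^ 2) (hαx : α x = 0) :
    convProd k (matrixCoeff ρ i i) (matrixCoeff ρ i i) = α.toLinearMap := by
  refine b.ext_pow_mul hb (fun m => ?_) (fun m => ?_)
  · rw [convProd_matrixCoeff_self_pow ρ hcg hρg, AlgHom.toLinearMap_apply, map_pow, hαg]
  · rw [convProd_matrixCoeff_self_pow_mul ρ hcg hcx hρg hρx, AlgHom.toLinearMap_apply, map_mul,
      hαx, mul_zero]

theorem convProd_matrixCoeff_eq_zero_of_ne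
    (hb : ∀ p : Fin N × Fin 2, b p = g ^ (p.1 : ℕ) * x ^ (p.2 : ℕ))
    (hcg : Coalgebra.comul (R := k) g = g ⊗ₜ[k] g)
    (hcx : Coalgebra.comul (R := k) x = x ⊗ₜ[k] g + 1 ⊗ₜ[k] x) (hρg : ρ g = diagonal d)
    {i j : n} (hij : i ≠ j) :
    convProd k (matrixCoeff ρ i j) (matrixCoeff ρ i j) = 0 := by
  refine b.ext_pow_mul hb (fun m => ?_) (fun m => ?_)
  · rw [convProd_matrixCoeff_pow_of_ne ρ hcg hρg hij, LinearMap.zero_apply]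
  · rw [convProd_matrixCoeff_pow_mul_of_ne ρ hcg hcx hρg hij, LinearMap.zero_apply]

end MatrixCoeff

theorem A4pp_dual_comatrix_squares_general
    (k : Type*) [Field k]
    (ξ : k) (hξ : IsPrimitiveRoot ξ 4)
    (B : Type*) [Ring B] [Bialgebra k B]
    (g x : B)
    (b : Module.Basis (Fin 4 × Fin 2) k B)
    (hb : ∀ p : Fin 4 × Fin 2, b p = g ^ (p.1 : ℕ) * x ^ (p.2 : ℕ))
    (hcg : Coalgebra.comul (R := k) g = g ⊗ₜ[k] g)
    (hcx : Coalgebra.comul (R := k) x = x ⊗ₜ[k] g + 1 ⊗ₜ[k] x)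
    (ρ : B →ₐ[k] Matrix (Fin 2) (Fin 2) k)
    (hρg : ρ g = !![ξ, 0; 0, -ξ]) (hρx : ρ x = !![0, 2; -1, 0])
    (e : Fin 2 → Fin 2 → (B →ₗ[k] k))
    (he : ∀ i j : Fin 2, ∀ a : B, e i j a = ρ a i j)
    (α : B →ₐ[k] k) (hαg : α g = -1) (hαx : α x = 0) :
    convProd k (e 0 0) (e 0 0) = α.toLinearMap ∧
    convProd k (e 1 1) (e 1 1) = α.toLinearMap ∧
    convProd k (e 0 1) (e 0 1) = 0 ∧
    convProd k (e 1 0) (e 1 0) = 0 := by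
  obtain rfl : e = matrixCoeff ρ := by
    ext i j a
    exact he i j a
  have hξ2 : ξ ^ 2 = -1 := (hξ.pow_of_dvd two_ne_zero (by norm_num)).eq_neg_one_of_two_right
  have hρg' : ρ g = diagonal ![ξ, -ξ] := by rw [hρg, diagonal_vec2]
  have hρx' : ∀ i, ρ x i i = 0 := by simp [hρx, Fin.forall_fin_two]
  exact ⟨convProd_matrixCoeff_self_eq ρ b hb hcg hcx hρg' hρx' α 0 (by simp [hαg, hξ2]) hαx,
    convProd_matrixCoeff_self_eq ρ b hb hcg hcx hρg' hρx' α 1 (by simp [hαg, hξ2]) hαx,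
    convProd_matrixCoeff_eq_zero_of_ne ρ b hb hcg hcx hρg' (by decide),
    convProd_matrixCoeff_eq_zero_of_ne ρ b hb hcg hcx hρg' (by decide)⟩

/-- For the comatrix elements `e_{ij} = E_{ij}∘ρ` of `A = (A''₄)*` arising from
the simple 2-dimensional representation `ρ(g) = diag(ξ,-ξ)`, `ρ(x) = [[0,2],[-1,0]]`, one has
`e₁₁² = e₂₂² = α` and `e₁₂² = e₂₁² = 0` under the convolution product, where `α` is the
character `g ↦ -1, x ↦ 0`. -/
theorem A4pp_dual_comatrix_squares
    (k : Type*) [Field k] [IsAlgClosed k] [CharZero k]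
    (ξ : k) (hξ : IsPrimitiveRoot ξ 4)
    (B : Type*) [Ring B] [Bialgebra k B]
    (g x : B) (hg : g ^ 4 = 1) (hx : x ^ 2 = g ^ 2 - 1) (hgx : g * x = -(x * g))
    (b : Module.Basis (Fin 4 × Fin 2) k B)
    (hb : ∀ p : Fin 4 × Fin 2, b p = g ^ (p.1 : ℕ) * x ^ (p.2 : ℕ))
    (hcg : Coalgebra.comul (R := k) g = g ⊗ₜ[k] g)
    (hcx : Coalgebra.comul (R := k) x = x ⊗ₜ[k] g + 1 ⊗ₜ[k] x)
    (ρ : B →ₐ[k] Matrix (Fin 2) (Fin 2) k)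
    (hρg : ρ g = !![ξ, 0; 0, -ξ]) (hρx : ρ x = !![0, 2; -1, 0])
    (e : Fin 2 → Fin 2 → (B →ₗ[k] k))
    (he : ∀ i j : Fin 2, ∀ a : B, e i j a = ρ a i j)
    (α : B →ₐ[k] k) (hαg : α g = -1) (hαx : α x = 0) :
    convProd k (e 0 0) (e 0 0) = α.toLinearMap ∧
    convProd k (e 1 1) (e 1 1) = α.toLinearMap ∧
    convProd k (e 0 1) (e 0 1) = 0 ∧
    convProd k (e 1 0) (e 1 0) = 0 :=
  A4pp_dual_comatrix_squares_general k ξ hξ B g x b hb hcg hcx ρ hρg hρx e he α hαg hαx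
end

section
/- With notation as before, the comatrix elements of A = (A''₄)* satisfy e₁₁e₂₂ = e₂₂e₁₁ = ε and e₁₂e₂₁ = e₂₁e₁₂ = 0 under the convolution product. -/
open TensorProduct

/-! `g` is group-like and `x` is `(g, 1)`-skew-primitive, so `Δ(gⁿ) = gⁿ ⊗ gⁿ` and
`Δ(gⁿx) = gⁿx ⊗ gⁿ⁺¹ + gⁿ ⊗ gⁿx`, while the counit axiom forces `ε(g) = 1` and `ε(x) = 0`.
As `ρ(gⁿ)` is diagonal and `ρ(gⁿx)` antidiagonal, on the basis `gⁿxᵐ` the products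
`e₁₂e₂₁`, `e₂₁e₁₂` vanish identically, while `e₁₁e₂₂` and `e₂₂e₁₁` take the value
`ξⁿ(-ξ)ⁿ = (-ξ²)ⁿ = 1` on `gⁿ` and `0` on `gⁿx`, exactly like `ε`. -/

open Coalgebra

section Coalgebra

variable {k B : Type*} [Field k] [AddCommGroup B] [Module k B] [Coalgebra k B]

lemma isGroupLikeElem_of_comul_eq_tmul_self {a : B} (ha0 : a ≠ 0)
    (ha : comul (R := k) a = a ⊗ₜ a) : IsGroupLikeElem k a := by
  refine ⟨?_, ha⟩
  have h := congrArg (TensorProduct.lid k B) (rTensor_counit_comul (R := k) a)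
  rw [ha, LinearMap.rTensor_tmul, TensorProduct.lid_tmul, TensorProduct.lid_tmul] at h
  exact smul_left_injective k ha0 h

lemma counit_eq_zero_of_comul_eq_skewPrimitive {x g h : B} (hg : IsGroupLikeElem k g)
    (hh : IsGroupLikeElem k h) (hx : comul (R := k) x = x ⊗ₜ g + h ⊗ₜ x) :
    counit (R := k) x = 0 := by
  have hc := congrArg (TensorProduct.lid k B) (rTensor_counit_comul (R := k) x)
  rw [hx, map_add, LinearMap.rTensor_tmul, LinearMap.rTensor_tmul, map_add,
    TensorProduct.lid_tmul, TensorProduct.lid_tmul, TensorProduct.lid_tmul, hh.counit_eq_one,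
    one_smul, add_eq_right, smul_eq_zero] at hc
  exact hc.resolve_right hg.ne_zero

lemma convProd_apply_of_comul_eq_tmul_self (f h : B →ₗ[k] k) {a : B}
    (ha : comul (R := k) a = a ⊗ₜ a) : convProd k f h a = f a * h a := by
  simp [convProd, ha]

lemma convProd_apply_of_comul_eq_add_tmul (f h : B →ₗ[k] k) {a u v u' v' : B}
    (ha : comul (R := k) a = u ⊗ₜ v + u' ⊗ₜ v') :
    convProd k f h a = f u * h v + f u' * h v' := by
  simp [convProd, ha]

end Coalgebra

lemma comul_mul_of_comul_eq_skewPrimitive {R A : Type*} [CommSemiring R] [Semiring A]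
    [Bialgebra R A] {a x g : A} (ha : IsGroupLikeElem R a)
    (hx : comul (R := R) x = x ⊗ₜ g + 1 ⊗ₜ x) :
    comul (R := R) (a * x) = (a * x) ⊗ₜ (a * g) + a ⊗ₜ (a * x) := by
  rw [Bialgebra.comul_mul, ha.comul_eq_tmul_self, hx, mul_add,
    Algebra.TensorProduct.tmul_mul_tmul, Algebra.TensorProduct.tmul_mul_tmul, mul_one]

lemma Module.Basis.ext_of_pow_mul_pow {k B M : Type*} [Semiring k] [Semiring B] [Module k B]
    [AddCommMonoid M] [Module k M] {m : ℕ} {g x : B}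
    (b : Module.Basis (Fin m × Fin 2) k B)
    (hb : ∀ p : Fin m × Fin 2, b p = g ^ (p.1 : ℕ) * x ^ (p.2 : ℕ))
    {φ ψ : B →ₗ[k] M} (h₀ : ∀ n : ℕ, φ (g ^ n) = ψ (g ^ n))
    (h₁ : ∀ n : ℕ, φ (g ^ n * x) = ψ (g ^ n * x)) : φ = ψ := by
  refine b.ext fun ⟨i, j⟩ => ?_
  rw [hb]
  fin_cases j
  · simpa using h₀ i
  · simpa using h₁ i

lemma Matrix.fin_two_diagonal_pow {R : Type*} [Semiring R] (a b : R) (n : ℕ) :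
    !![a, 0; 0, b] ^ n = !![a ^ n, 0; 0, b ^ n] := by
  have hdiag : !![a, 0; 0, b] = Matrix.diagonal ![a, b] := by
    ext i j; fin_cases i <;> fin_cases j <;> rfl
  rw [hdiag, Matrix.diagonal_pow]
  ext i j; fin_cases i <;> fin_cases j <;> simp

theorem A4pp_dual_comatrix_products_general
    (k : Type*) [Field k]
    (ξ : k) (hξ : IsPrimitiveRoot ξ 4)
    (B : Type*) [Ring B] [Bialgebra k B]
    (g x : B)
    (b : Module.Basis (Fin 4 × Fin 2) k B)
    (hb : ∀ p : Fin 4 × Fin 2, b p = g ^ (p.1 : ℕ) * x ^ (p.2 : ℕ))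
    (hcg : Coalgebra.comul (R := k) g = g ⊗ₜ[k] g)
    (hcx : Coalgebra.comul (R := k) x = x ⊗ₜ[k] g + 1 ⊗ₜ[k] x)
    (ρ : B →ₐ[k] Matrix (Fin 2) (Fin 2) k)
    (hρg : ρ g = !![ξ, 0; 0, -ξ]) (hρx : ρ x = !![0, 2; -1, 0])
    (e : Fin 2 → Fin 2 → (B →ₗ[k] k))
    (he : ∀ i j : Fin 2, ∀ a : B, e i j a = ρ a i j)
    :
    convProd k (e 0 0) (e 1 1) = Coalgebra.counit ∧
    convProd k (e 1 1) (e 0 0) = Coalgebra.counit ∧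
    convProd k (e 0 1) (e 1 0) = 0 ∧
    convProd k (e 1 0) (e 0 1) = 0 := by
  have hξn : ∀ n : ℕ, ξ ^ n * (-ξ) ^ n = 1 := fun n => by
    rw [← mul_pow, mul_neg, ← sq,
      (hξ.pow_of_dvd two_ne_zero (by norm_num)).eq_neg_one_of_two_right, neg_neg, one_pow]
  have hG : IsGroupLikeElem k g :=
    isGroupLikeElem_of_comul_eq_tmul_self (by simpa [hb] using b.ne_zero (1, 0)) hcg
  have hεx : counit (R := k) x = 0 := counit_eq_zero_of_comul_eq_skewPrimitive hG .one hcx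
  have hρ (n : ℕ) : ρ (g ^ n) = !![ξ ^ n, 0; 0, (-ξ) ^ n] := by
    rw [map_pow, hρg, Matrix.fin_two_diagonal_pow]
  have hconv₀ (f h : B →ₗ[k] k) (n : ℕ) : convProd k f h (g ^ n) = f (g ^ n) * h (g ^ n) :=
    convProd_apply_of_comul_eq_tmul_self f h hG.pow.comul_eq_tmul_self
  have hconv₁ (f h : B →ₗ[k] k) (n : ℕ) : convProd k f h (g ^ n * x) =
      f (g ^ n * x) * h (g ^ (n + 1)) + f (g ^ n) * h (g ^ n * x) := by
    rw [pow_succ]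
    exact convProd_apply_of_comul_eq_add_tmul f h (comul_mul_of_comul_eq_skewPrimitive hG.pow hcx)
  refine ⟨?_, ?_, ?_, ?_⟩ <;> refine b.ext_of_pow_mul_pow hb (fun n => ?_) (fun n => ?_) <;>
    simp [hconv₀, hconv₁, he, hρ, hρx, hεx, hG.pow.counit_eq_one, hξn, mul_comm ((-ξ) ^ _)]

/-- The comatrix elements of `A = (A''₄)*` satisfy `e₁₁e₂₂ = e₂₂e₁₁ = ε` and
`e₁₂e₂₁ = e₂₁e₁₂ = 0` under the convolution product. -/
theorem A4pp_dual_comatrix_products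
    (k : Type*) [Field k] [IsAlgClosed k] [CharZero k]
    (ξ : k) (hξ : IsPrimitiveRoot ξ 4)
    (B : Type*) [Ring B] [Bialgebra k B]
    (g x : B) (hg : g ^ 4 = 1) (hx : x ^ 2 = g ^ 2 - 1) (hgx : g * x = -(x * g))
    (b : Module.Basis (Fin 4 × Fin 2) k B)
    (hb : ∀ p : Fin 4 × Fin 2, b p = g ^ (p.1 : ℕ) * x ^ (p.2 : ℕ))
    (hcg : Coalgebra.comul (R := k) g = g ⊗ₜ[k] g)
    (hcx : Coalgebra.comul (R := k) x = x ⊗ₜ[k] g + 1 ⊗ₜ[k] x)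
    (ρ : B →ₐ[k] Matrix (Fin 2) (Fin 2) k)
    (hρg : ρ g = !![ξ, 0; 0, -ξ]) (hρx : ρ x = !![0, 2; -1, 0])
    (e : Fin 2 → Fin 2 → (B →ₗ[k] k))
    (he : ∀ i j : Fin 2, ∀ a : B, e i j a = ρ a i j)
    :
    convProd k (e 0 0) (e 1 1) = Coalgebra.counit ∧
    convProd k (e 1 1) (e 0 0) = Coalgebra.counit ∧
    convProd k (e 0 1) (e 1 0) = 0 ∧
    convProd k (e 1 0) (e 0 1) = 0 :=
  A4pp_dual_comatrix_products_general k ξ hξ B g x b hb hcg hcx ρ hρg hρx e he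
end

section
/- In A = (A''₄)*, the elements e₁₁e₁₂ and e₁₁e₂₁ are non-trivial skew-primitives: Δ(e₁₁e₁₂) = e₁₁e₁₂⊗ε + α⊗e₁₁e₁₂ and Δ(e₁₁e₂₁) = e₁₁e₂₁⊗α + ε⊗e₁₁e₂₁. -/
/-!
In the dual algebra, `Δ y = y ⊗ ψ + φ ⊗ y` means `y (a * c) = y a * ψ c + φ a * y c`. For fixed
`y, φ, ψ` the `c` satisfying this for every `a` form a subalgebra, so it is enough to take
`c ∈ {g, x}` and `a` a basis vector `g ^ m` or `g ^ m * x`. Computed through `ρ`, the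
functionals `e₁₁e₁₂` and `e₁₁e₂₁` vanish on powers of `g` and take the values `2 (-1) ^ m` and
`-1` on `g ^ m * x`; after rewriting `g ^ m * x * g` and `g ^ m * x * x` in the basis via
`g x = -x g` and `x² = g² - 1`, the required identities reduce to these values. They are
non-trivial because at `x` both `ε` and `α` vanish while the functionals do not.
-/

open TensorProduct

theorem isGroupLikeElem_of_comul_eq_tmul_self_s12 {k B : Type*} [Field k] [AddCommGroup B]
    [Module k B] [Coalgebra k B] {g : B} (hg : g ≠ 0)
    (hcg : Coalgebra.comul (R := k) g = g ⊗ₜ[k] g) : IsGroupLikeElem k g := by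
  refine ⟨?_, hcg⟩
  have h := congrArg (TensorProduct.lid k B) (Coalgebra.rTensor_counit_comul (R := k) g)
  rw [hcg, LinearMap.rTensor_tmul, lid_tmul, lid_tmul, one_smul] at h
  have h' : (Coalgebra.counit (R := k) g - 1) • g = 0 := by rw [sub_smul, one_smul, h, sub_self]
  exact sub_eq_zero.1 ((smul_eq_zero.1 h').resolve_right hg)

theorem counit_eq_zero_of_comul_eq_add_tmul {k B : Type*} [Field k] [Ring B] [Bialgebra k B]
    {g x : B} (hg : g ≠ 0) (hcx : Coalgebra.comul (R := k) x = x ⊗ₜ[k] g + 1 ⊗ₜ[k] x) :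
    Coalgebra.counit (R := k) x = 0 := by
  have h := congrArg (TensorProduct.lid k B) (Coalgebra.rTensor_counit_comul (R := k) x)
  rw [hcx, map_add, LinearMap.rTensor_tmul, LinearMap.rTensor_tmul, map_add, lid_tmul, lid_tmul,
    lid_tmul, Bialgebra.counit_one, one_smul, add_eq_right, smul_eq_zero] at h
  exact h.resolve_right hg

theorem convProd_apply_of_isGroupLikeElem {k B : Type*} [CommRing k] [AddCommGroup B]
    [Module k B] [Coalgebra k B] {f h : B →ₗ[k] k} {a : B} (ha : IsGroupLikeElem k a) :
    convProd k f h a = f a * h a := by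
  simp [convProd, ha.comul_eq_tmul_self]

theorem convProd_apply_mul_of_isGroupLikeElem {k B : Type*} [CommRing k] [Ring B]
    [Bialgebra k B] {f h : B →ₗ[k] k} {a g x : B} (ha : IsGroupLikeElem k a)
    (hcx : Coalgebra.comul (R := k) x = x ⊗ₜ[k] g + 1 ⊗ₜ[k] x) :
    convProd k f h (a * x) = f (a * x) * h (a * g) + f a * h (a * x) := by
  simp [convProd, Bialgebra.comul_mul, ha.comul_eq_tmul_self, hcx, mul_add]

theorem map_pow_of_eq_diagonal_s12 {k B : Type*} [CommRing k] [Ring B] [Algebra k B] {g : B}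
    {a d : k} (ρ : B →ₐ[k] Matrix (Fin 2) (Fin 2) k) (hρg : ρ g = !![a, 0; 0, d]) (m : ℕ) :
    ρ (g ^ m) = !![a ^ m, 0; 0, d ^ m] := by
  rw [map_pow, hρg, ← Matrix.diagonal_vec2, Matrix.diagonal_pow, ← Matrix.diagonal_vec2]
  congr; ext i; fin_cases i <;> rfl

section SkewDerivation

variable {k B : Type*} [CommRing k] [Ring B] [Algebra k B]

/-- Skew-primitivity `Δ y = y ⊗ ψ + φ ⊗ y` of `y` in the dual algebra. -/
def IsSkewDerivation (φ ψ : B →ₐ[k] k) (y : B →ₗ[k] k) : Prop :=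
  ∀ a c, y (a * c) = y a * ψ c + φ a * y c

theorem isSkewDerivation_of_adjoin_eq_top {S : Set B} (hS : Algebra.adjoin k S = ⊤)
    {φ ψ : B →ₐ[k] k} {y : B →ₗ[k] k} (h1 : y 1 = 0)
    (hgen : ∀ s ∈ S, ∀ a, y (a * s) = y a * ψ s + φ a * y s) : IsSkewDerivation φ ψ y := by
  intro a c
  have hc : c ∈ Algebra.adjoin k S := hS ▸ Algebra.mem_top
  induction hc using Algebra.adjoin_induction generalizing a with
  | mem s hs => exact hgen s hs a
  | algebraMap r => simp [Algebra.algebraMap_eq_smul_one, h1, mul_comm]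
  | add c c' _ _ hc hc' => simp only [mul_add, map_add, hc, hc']; ring
  | mul c c' _ _ hc hc' => rw [← mul_assoc, hc', hc, hc' c, map_mul, map_mul]; ring

theorem Module.Basis.adjoin_eq_top {ι : Type*} (b : Module.Basis ι k B) {S : Set B}
    (hb : ∀ i, b i ∈ Algebra.adjoin k S) : Algebra.adjoin k S = ⊤ := by
  refine eq_top_iff.2 fun a _ => ?_
  have ha : a ∈ Submodule.span k (Set.range b) := b.span_eq ▸ Submodule.mem_top
  exact Submodule.span_le (p := Subalgebra.toSubmodule (Algebra.adjoin k S)).2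
    (Set.range_subset_iff.2 hb) ha

theorem isSkewDerivation_of_apply_pow {g x : B} (hx : x ^ 2 = g ^ 2 - 1)
    (hgx : g * x = -(x * g)) {ι : Type*} (b : Module.Basis ι k B)
    (hb : ∀ i, ∃ m : ℕ, b i = g ^ m ∨ b i = g ^ m * x)
    {φ ψ : B →ₐ[k] k} (hψg : ψ g = -φ g) (hφx : φ x = 0) (hψx : ψ x = 0) {y : B →ₗ[k] k}
    (hy : ∀ m : ℕ, y (g ^ m) = 0) (hyx : ∀ m : ℕ, y (g ^ m * x) = φ g ^ m * y x) :
    IsSkewDerivation φ ψ y := by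
  have hyg : y g = 0 := by simpa using hy 1
  have hxg : ∀ m : ℕ, g ^ m * x * g = -(g ^ (m + 1) * x) := fun m => by
    rw [mul_assoc, ← neg_eq_iff_eq_neg.2 hgx, mul_neg, ← mul_assoc, ← pow_succ]
  have hxx : ∀ m : ℕ, g ^ m * x * x = g ^ (m + 2) - g ^ m := fun m => by
    rw [mul_assoc, ← sq, hx, mul_sub, mul_one, pow_add]
  have hgen : ∀ i, b i ∈ Algebra.adjoin k {g, x} := fun i => by
    have hg : g ∈ Algebra.adjoin k {g, x} := Algebra.subset_adjoin (by simp)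
    have hx' : x ∈ Algebra.adjoin k {g, x} := Algebra.subset_adjoin (by simp)
    obtain ⟨m, hm | hm⟩ := hb i <;> rw [hm]
    exacts [pow_mem hg m, mul_mem (pow_mem hg m) hx']
  refine isSkewDerivation_of_adjoin_eq_top (b.adjoin_eq_top hgen) (by simpa using hy 0) ?_
  rintro s hs a
  suffices y ∘ₗ LinearMap.mulRight k s = ψ s • y + y s • φ.toLinearMap by
    simpa [mul_comm] using LinearMap.congr_fun this a
  refine b.ext fun i => ?_
  obtain ⟨m, hm | hm⟩ := hb i <;> rcases hs with rfl | rfl <;>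
    simp [hm, hy, hyx, hyg, hxg, hxx, hψg, hφx, hψx, ← pow_succ] <;> ring

end SkewDerivation

theorem A4pp_dual_skew_primitives_general
    (k : Type*) [Field k] [CharZero k]
    (ξ : k) (hξ : IsPrimitiveRoot ξ 4)
    (B : Type*) [Ring B] [Bialgebra k B]
    (g x : B) (hx : x ^ 2 = g ^ 2 - 1) (hgx : g * x = -(x * g))
    (b : Module.Basis (Fin 4 × Fin 2) k B)
    (hb : ∀ p : Fin 4 × Fin 2, b p = g ^ (p.1 : ℕ) * x ^ (p.2 : ℕ))
    (hcg : Coalgebra.comul (R := k) g = g ⊗ₜ[k] g)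
    (hcx : Coalgebra.comul (R := k) x = x ⊗ₜ[k] g + 1 ⊗ₜ[k] x)
    (ρ : B →ₐ[k] Matrix (Fin 2) (Fin 2) k)
    (hρg : ρ g = !![ξ, 0; 0, -ξ]) (hρx : ρ x = !![0, 2; -1, 0])
    (e : Fin 2 → Fin 2 → (B →ₗ[k] k))
    (he : ∀ i j : Fin 2, ∀ a : B, e i j a = ρ a i j)
    (α : B →ₐ[k] k) (hαg : α g = -1) (hαx : α x = 0) :
    (∀ a c : B, convProd k (e 0 0) (e 0 1) (a * c) =
        convProd k (e 0 0) (e 0 1) a * Coalgebra.counit c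
          + α a * convProd k (e 0 0) (e 0 1) c) ∧
    (∀ t : k, convProd k (e 0 0) (e 0 1) ≠ t • (Coalgebra.counit - α.toLinearMap)) ∧
    (∀ a c : B, convProd k (e 0 0) (e 1 0) (a * c) =
        convProd k (e 0 0) (e 1 0) a * α c
          + Coalgebra.counit a * convProd k (e 0 0) (e 1 0) c) ∧
    (∀ t : k, convProd k (e 0 0) (e 1 0) ≠ t • (α.toLinearMap - Coalgebra.counit)) := by
  have hξ2 : ξ ^ 2 = -1 := (hξ.pow_of_dvd two_ne_zero (by norm_num)).eq_neg_one_of_two_right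
  have hg0 : g ≠ 0 := by simpa [hb] using b.ne_zero (1, 0)
  have hG := isGroupLikeElem_of_comul_eq_tmul_self_s12 hg0 hcg
  have hεx := counit_eq_zero_of_comul_eq_add_tmul hg0 hcx
  have hρ := map_pow_of_eq_diagonal_s12 ρ hρg
  have hbasis : ∀ p, ∃ m : ℕ, b p = g ^ m ∨ b p = g ^ m * x := by
    rintro ⟨i, j⟩; fin_cases j <;> exact ⟨i, by simp [hb]⟩
  have hy : ∀ m : ℕ, convProd k (e 0 0) (e 0 1) (g ^ m) = 0 := fun m => by
    simp [convProd_apply_of_isGroupLikeElem hG.pow, he, hρ]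
  have hyx : ∀ m : ℕ, convProd k (e 0 0) (e 0 1) (g ^ m * x) = 2 * (-1) ^ m := fun m => by
    simp [convProd_apply_mul_of_isGroupLikeElem hG.pow hcx, he, hρ, hρx, ← pow_succ, ← hξ2]
    ring
  have hz : ∀ m : ℕ, convProd k (e 0 0) (e 1 0) (g ^ m) = 0 := fun m => by
    simp [convProd_apply_of_isGroupLikeElem hG.pow, he, hρ]
  have hzx : ∀ m : ℕ, convProd k (e 0 0) (e 1 0) (g ^ m * x) = -1 := fun m => by
    simp [convProd_apply_mul_of_isGroupLikeElem hG.pow hcx, he, hρ, hρx, ← pow_succ, ← mul_pow,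
      ← sq, hξ2]
  have hy1 : convProd k (e 0 0) (e 0 1) x = 2 := by simpa using hyx 0
  have hz1 : convProd k (e 0 0) (e 1 0) x = -1 := by simpa using hzx 0
  have hyD : IsSkewDerivation α (Bialgebra.counitAlgHom k B) (convProd k (e 0 0) (e 0 1)) :=
    isSkewDerivation_of_apply_pow hx hgx b hbasis (by simp [hG.counit_eq_one, hαg]) hαx hεx hy
      (by simp [hyx, hy1, hαg, mul_comm])
  have hzD : IsSkewDerivation (Bialgebra.counitAlgHom k B) α (convProd k (e 0 0) (e 1 0)) :=
    isSkewDerivation_of_apply_pow hx hgx b hbasis (by simp [hG.counit_eq_one, hαg]) hεx hαx hz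
      (by simp [hzx, hz1, hG.counit_eq_one])
  refine ⟨hyD, fun t h => ?_, hzD, fun t h => ?_⟩
  · simpa [hεx, hαx, hy1] using LinearMap.congr_fun h x
  · simpa [hεx, hαx, hz1] using LinearMap.congr_fun h x

/-- In `A = (A''₄)*`, the elements `e₁₁e₁₂` and `e₁₁e₂₁` are non-trivial
skew-primitives: `Δ(e₁₁e₁₂) = e₁₁e₁₂ ⊗ ε + α ⊗ e₁₁e₁₂` and
`Δ(e₁₁e₂₁) = e₁₁e₂₁ ⊗ α + ε ⊗ e₁₁e₂₁`. (Since the comultiplication of the dual is dual to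
the multiplication, the skew-primitivity of `y` with respect to group-likes `α, ε` is
expressed by `y(ab) = y(a)ε(b) + α(a)y(b)`; `y` is non-trivial iff `y ∉ k·(ε - α)`.) -/
theorem A4pp_dual_skew_primitives
    (k : Type*) [Field k] [IsAlgClosed k] [CharZero k]
    (ξ : k) (hξ : IsPrimitiveRoot ξ 4)
    (B : Type*) [Ring B] [Bialgebra k B]
    (g x : B) (hg : g ^ 4 = 1) (hx : x ^ 2 = g ^ 2 - 1) (hgx : g * x = -(x * g))
    (b : Module.Basis (Fin 4 × Fin 2) k B)
    (hb : ∀ p : Fin 4 × Fin 2, b p = g ^ (p.1 : ℕ) * x ^ (p.2 : ℕ))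
    (hcg : Coalgebra.comul (R := k) g = g ⊗ₜ[k] g)
    (hcx : Coalgebra.comul (R := k) x = x ⊗ₜ[k] g + 1 ⊗ₜ[k] x)
    (ρ : B →ₐ[k] Matrix (Fin 2) (Fin 2) k)
    (hρg : ρ g = !![ξ, 0; 0, -ξ]) (hρx : ρ x = !![0, 2; -1, 0])
    (e : Fin 2 → Fin 2 → (B →ₗ[k] k))
    (he : ∀ i j : Fin 2, ∀ a : B, e i j a = ρ a i j)
    (α : B →ₐ[k] k) (hαg : α g = -1) (hαx : α x = 0) :
    (∀ a c : B, convProd k (e 0 0) (e 0 1) (a * c) =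
        convProd k (e 0 0) (e 0 1) a * Coalgebra.counit c
          + α a * convProd k (e 0 0) (e 0 1) c) ∧
    (∀ t : k, convProd k (e 0 0) (e 0 1) ≠ t • (Coalgebra.counit - α.toLinearMap)) ∧
    (∀ a c : B, convProd k (e 0 0) (e 1 0) (a * c) =
        convProd k (e 0 0) (e 1 0) a * α c
          + Coalgebra.counit a * convProd k (e 0 0) (e 1 0) c) ∧
    (∀ t : k, convProd k (e 0 0) (e 1 0) ≠ t • (α.toLinearMap - Coalgebra.counit)) :=
  A4pp_dual_skew_primitives_general k ξ hξ B g x hx hgx b hb hcg hcx ρ hρg hρx e he α hαg hαx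
end

section
/- Let H be a finite-dimensional Hopf algebra generated as an algebra by two simple subcoalgebras C and D with S(C) = D. Then H is generated as an algebra by C and 1. -/
/-
The subalgebra `B` generated by a subcoalgebra `C` is again a subcoalgebra, i.e. a sub-bialgebra.
The linear maps `H → H` sending `B` into `B` form a subalgebra `W` of the finite-dimensional
convolution algebra, and `W` contains `id`, whose convolution inverse is `S`. A finite-dimensional
algebra is Artinian, so `id` is already invertible in `W`; hence `S ∈ W`, i.e. `S(B) ⊆ B`. Thus
`D = S(C) ⊆ B`, and `B` contains the generators `C ∪ D` of `H`.
-/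

open TensorProduct Coalgebra HopfAlgebra WithConv

/-- A submodule `C` of a coalgebra is a subcoalgebra if `Δ(C) ⊆ C ⊗ C`. -/
def IsSubcoalgebra (k : Type*) [CommRing k] {H : Type*} [AddCommGroup H] [Module k H]
    [Coalgebra k H] (C : Submodule k H) : Prop :=
  ∀ c ∈ C, Coalgebra.comul (R := k) c ∈ LinearMap.range (TensorProduct.map C.subtype C.subtype)

/-- A subcoalgebra is simple if it is nonzero and has no proper nonzero subcoalgebras. -/
def IsSimpleSubcoalgebra (k : Type*) [CommRing k] {H : Type*} [AddCommGroup H] [Module k H]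
    [Coalgebra k H] (C : Submodule k H) : Prop :=
  IsSubcoalgebra k C ∧ C ≠ ⊥ ∧
    ∀ C' : Submodule k H, C' ≤ C → IsSubcoalgebra k C' → C' = ⊥ ∨ C' = C

instance WithConv.moduleFinite {R M : Type*} [Semiring R] [AddCommMonoid M] [Module R M]
    [Module.Finite R M] : Module.Finite R (WithConv M) :=
  Module.Finite.equiv (WithConv.linearEquiv R M).symm

theorem Subalgebra.mem_of_mul_eq_one {K A : Type*} [Field K] [Ring A] [Algebra K A]
    [FiniteDimensional K A] (W : Subalgebra K A) {a b : A} (ha : a ∈ W) (hab : a * b = 1) :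
    b ∈ W := by
  have : IsArtinianRing W := IsArtinianRing.of_finite K W
  have hreg : IsRightRegular (⟨a, ha⟩ : W) := fun y z h => Subtype.ext <| by
    simpa [mul_assoc, hab] using congrArg (fun w : W => (w : A) * b) h
  obtain ⟨u, hu⟩ := IsArtinianRing.isUnit_iff_isRightRegular.mpr hreg
  have hinv : ((u⁻¹ : Wˣ) : A) * a = 1 := by
    have := congrArg Subtype.val u.inv_mul
    rwa [hu] at this
  have : ((u⁻¹ : Wˣ) : A) = b := by
    rw [← one_mul b, ← hinv, mul_assoc, hab, mul_one]
  exact this ▸ (u⁻¹ : Wˣ).1.2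

def Subalgebra.convMapsTo {k C A : Type*} [CommRing k] [AddCommGroup C] [Module k C]
    [Coalgebra k C] [Ring A] [Algebra k A] {V : Submodule k C} (hV : IsSubcoalgebra k V)
    (B : Subalgebra k A) :
    Subalgebra k (WithConv (C →ₗ[k] A)) where
  carrier := {f | ∀ x ∈ V, f x ∈ B}
  mul_mem' {f g} hf hg x hx := by
    obtain ⟨t, ht⟩ := hV x hx
    rw [LinearMap.convMul_apply, ← ht]
    clear ht
    induction t using TensorProduct.induction_on with
    | zero => simp
    | tmul a b => simpa using B.mul_mem (hf a a.2) (hg b b.2)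
    | add s t hs ht => simpa [map_add] using B.add_mem hs ht
  add_mem' hf hg x hx := B.add_mem (hf x hx) (hg x hx)
  algebraMap_mem' r x _ := by
    simpa using B.smul_mem (B.algebraMap_mem (counit x)) r

theorem Subalgebra.isSubcoalgebra_toSubmodule_iff {k H : Type*} [CommRing k] [Ring H]
    [Bialgebra k H] (B : Subalgebra k H) :
    IsSubcoalgebra k (Subalgebra.toSubmodule B) ↔
      B ≤ (Algebra.TensorProduct.map B.val B.val).range.comap (Bialgebra.comulAlgHom k H) :=
  Iff.rfl

theorem isSubcoalgebra_adjoin {k H : Type*} [CommRing k] [Ring H] [Bialgebra k H]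
    {V : Submodule k H} (hV : IsSubcoalgebra k V) :
    IsSubcoalgebra k (Subalgebra.toSubmodule (Algebra.adjoin k (V : Set H))) := by
  set B := Algebra.adjoin k (V : Set H)
  have hVB : V ≤ Subalgebra.toSubmodule B := fun _ hx => Algebra.subset_adjoin hx
  refine B.isSubcoalgebra_toSubmodule_iff.2 (Algebra.adjoin_le fun x hx => ?_)
  obtain ⟨t, ht⟩ := hV x hx
  refine ⟨TensorProduct.map (Submodule.inclusion hVB) (Submodule.inclusion hVB) t, ?_⟩
  change (TensorProduct.map (Subalgebra.toSubmodule B).subtype (Subalgebra.toSubmodule B).subtype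
    ∘ₗ TensorProduct.map (Submodule.inclusion hVB) (Submodule.inclusion hVB)) t = _
  rwa [← TensorProduct.map_comp, Submodule.subtype_comp_inclusion]

theorem Subalgebra.antipode_mem_of_isSubcoalgebra {k H : Type*} [Field k] [Ring H]
    [HopfAlgebra k H] [FiniteDimensional k H] (B : Subalgebra k H)
    (hB : IsSubcoalgebra k (Subalgebra.toSubmodule B)) {x : H} (hx : x ∈ B) :
    antipode k x ∈ B :=
  (convMapsTo hB B).mem_of_mul_eq_one (a := toConv LinearMap.id) (fun _ hy => hy)
    LinearMap.id_mul_antipode x hx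

theorem generated_by_one_simple_subcoalgebra_general
    (k : Type*) [Field k]
    (H : Type*) [Ring H] [HopfAlgebra k H] [FiniteDimensional k H]
    (C D : Submodule k H)
    (hC : IsSimpleSubcoalgebra k C)
    (hSCD : C.map (HopfAlgebra.antipode (R := k)) = D)
    (hgen : Algebra.adjoin k ((C : Set H) ∪ (D : Set H)) = ⊤) :
    Algebra.adjoin k (C : Set H) = ⊤ := by
  set B := Algebra.adjoin k (C : Set H)
  have hD : (D : Set H) ⊆ B := by
    rintro _ hd
    rw [← hSCD] at hd
    obtain ⟨c, hc, rfl⟩ := hd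
    exact B.antipode_mem_of_isSubcoalgebra (isSubcoalgebra_adjoin hC.1) (Algebra.subset_adjoin hc)
  rw [eq_top_iff, ← hgen]
  exact Algebra.adjoin_le (Set.union_subset Algebra.subset_adjoin hD)

/-- If a finite-dimensional Hopf algebra `H` is generated as an algebra by two
simple subcoalgebras `C` and `D` with `S(C) = D`, then `H` is generated as an algebra by `C`
and `1`. -/
theorem generated_by_one_simple_subcoalgebra
    (k : Type*) [Field k]
    (H : Type*) [Ring H] [HopfAlgebra k H] [FiniteDimensional k H]
    (C D : Submodule k H)
    (hC : IsSimpleSubcoalgebra k C) (hD : IsSimpleSubcoalgebra k D)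
    (hSCD : C.map (HopfAlgebra.antipode (R := k)) = D)
    (hgen : Algebra.adjoin k ((C : Set H) ∪ (D : Set H)) = ⊤) :
    Algebra.adjoin k (C : Set H) = ⊤ :=
  generated_by_one_simple_subcoalgebra_general k H C D hC hSCD hgen
end
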